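/- arXiv:2108.07045 — 13 statements merged into one kernel-verified Lean document; each statement's English description precedes it below -/
import Mathlib

section
/- The feasible region P(PC2) is exactly the projection of P(PC1) onto the (y, z)-variables: P(PC2) = {(y, z) : there exists x : I × J → ℝ such that (x, y, z) ∈ P(PC1)}. -/
/-!
For fixed `(y, z)` the customers decouple, and for a single customer with distances `dist`
every fractional assignment `x` (with `0 ≤ x ≤ y`, `∑ x = 1`) has cost
`r - ∑ j, (r - dist j) * x j` for every `r`. Taking `r = dist j` and bounding `x` by `y` on the
facilities nearer than `j` gives the `(PC2)` inequality for `j`. Conversely, a cost-minimising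
assignment, which exists by compactness, saturates every facility nearer than the farthest
facility `b` it uses (otherwise moving mass inwards lowers the cost), so its cost is exactly
the `(PC2)` bound for `b`.
-/

open Finset

section SingleCustomer

variable {J : Type*} [Fintype J]

def assignments (y : J → ℝ) : Set (J → ℝ) := {x | ∑ j, x j = 1} ∩ Set.Icc 0 y

/-- The right-hand side of the `(PC2)` constraint for the facility `j`. -/
noncomputable def greedyBound (dist y : J → ℝ) (j : J) : ℝ :=
  dist j - ∑ j' ∈ univ.filter (fun j' => dist j' < dist j), (dist j - dist j') * y j'

lemma mem_assignments {x y : J → ℝ} :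
    x ∈ assignments y ↔ ∑ j, x j = 1 ∧ (∀ j, 0 ≤ x j) ∧ ∀ j, x j ≤ y j :=
  Iff.rfl

lemma isCompact_assignments (y : J → ℝ) : IsCompact (assignments y) :=
  isCompact_Icc.of_isClosed_subset
    ((isClosed_eq (by fun_prop) continuous_const).inter isClosed_Icc) Set.inter_subset_right

lemma assignments_nonempty {y : J → ℝ} (hy0 : 0 ≤ y) (hy : 1 ≤ ∑ j, y j) :
    (assignments y).Nonempty := by
  have hpos : 0 < ∑ j, y j := one_pos.trans_le hy
  refine ⟨(∑ j, y j)⁻¹ • y, ?_, fun j => ?_, fun j => ?_⟩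
  · simp only [Set.mem_ofPred_eq, Pi.smul_apply, smul_eq_mul, ← mul_sum]
    exact inv_mul_cancel₀ hpos.ne'
  · exact mul_nonneg (inv_nonneg.2 hpos.le) (hy0 j)
  · exact mul_le_of_le_one_left (hy0 j) (inv_le_one_of_one_le₀ hy)

lemma cost_eq_sub_sum {dist x : J → ℝ} (hx : ∑ j, x j = 1) (r : ℝ) :
    ∑ j, dist j * x j = r - ∑ j, (r - dist j) * x j := by
  simp only [sub_mul, sum_sub_distrib, ← mul_sum, hx, mul_one, sub_sub_cancel]

lemma greedyBound_le_cost {dist y x : J → ℝ} (hx : x ∈ assignments y) (j : J) :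
    greedyBound dist y j ≤ ∑ j', dist j' * x j' := by
  obtain ⟨hsum, hx0, hxy⟩ := mem_assignments.1 hx
  have near : ∑ j' ∈ univ.filter (fun j' => dist j' < dist j), (dist j - dist j') * x j' ≤
      ∑ j' ∈ univ.filter (fun j' => dist j' < dist j), (dist j - dist j') * y j' :=
    sum_le_sum fun j' hj' =>
      mul_le_mul_of_nonneg_left (hxy j') (sub_nonneg.2 (mem_filter.1 hj').2.le)
  have far : ∑ j' ∈ univ.filter (fun j' => ¬dist j' < dist j), (dist j - dist j') * x j' ≤ 0 :=
    sum_nonpos fun j' hj' =>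
      mul_nonpos_of_nonpos_of_nonneg (sub_nonpos.2 (not_lt.1 (mem_filter.1 hj').2)) (hx0 j')
  rw [cost_eq_sub_sum hsum (dist j), ← sum_filter_add_sum_filter_not univ
    (fun j' => dist j' < dist j)]
  unfold greedyBound
  linarith

lemma exists_cost_lt_of_shift {dist y x : J → ℝ} (hx : x ∈ assignments y) {a b : J}
    (hab : dist a < dist b) (ha : x a < y a) (hb : 0 < x b) :
    ∃ x' ∈ assignments y, ∑ j, dist j * x' j < ∑ j, dist j * x j := by
  classical
  obtain ⟨hsum, hx0, hxy⟩ := mem_assignments.1 hx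
  have hne : a ≠ b := ne_of_apply_ne dist hab.ne
  set ε := min (y a - x a) (x b)
  have hε : 0 < ε := lt_min (sub_pos.2 ha) hb
  have hεa : ε ≤ y a - x a := min_le_left _ _
  have hεb : ε ≤ x b := min_le_right _ _
  set x' := x + Pi.single a ε - Pi.single b ε
  have at_a : x' a = x a + ε := by simp [x', hne]
  have at_b : x' b = x b - ε := by simp [x', hne.symm]
  have elsewhere : ∀ j, j ≠ a → j ≠ b → x' j = x j := fun j hja hjb => by simp [x', hja, hjb]
  have bounds : ∀ j, 0 ≤ x' j ∧ x' j ≤ y j := fun j => by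
    rcases eq_or_ne j a with rfl | hja
    · rw [at_a]; constructor <;> linarith [hx0 j]
    rcases eq_or_ne j b with rfl | hjb
    · rw [at_b]; constructor <;> linarith [hxy j]
    · rw [elsewhere j hja hjb]; exact ⟨hx0 j, hxy j⟩
  refine ⟨x', mem_assignments.2 ⟨?_, fun j => (bounds j).1, fun j => (bounds j).2⟩, ?_⟩
  · simp [x', sum_add_distrib, sum_sub_distrib, hsum]
  · have hcost : ∑ j, dist j * x' j = ∑ j, dist j * x j + (dist a - dist b) * ε := by
      simp only [x', Pi.sub_apply, Pi.add_apply, Pi.single_apply, mul_sub, mul_add, mul_ite,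
        mul_zero, sum_sub_distrib, sum_add_distrib, sum_ite_eq', mem_univ, if_true]
      ring
    linarith [mul_neg_of_neg_of_pos (sub_neg.2 hab) hε]

lemma exists_mem_assignments_cost_le {dist y : J → ℝ} {z : ℝ} (hy0 : 0 ≤ y)
    (hy : 1 ≤ ∑ j, y j) (hz : ∀ j, greedyBound dist y j ≤ z) :
    ∃ x ∈ assignments y, ∑ j, dist j * x j ≤ z := by
  obtain ⟨x, hx, hmin⟩ := (isCompact_assignments y).exists_isMinOn
    (assignments_nonempty hy0 hy)
    (by fun_prop : Continuous fun x : J → ℝ => ∑ j, dist j * x j).continuousOn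
  obtain ⟨hsum, hx0, hxy⟩ := mem_assignments.1 hx
  have hsupp : (univ.filter fun j => 0 < x j).Nonempty := by
    obtain ⟨j, -, hj⟩ := exists_lt_of_sum_lt (s := univ) (f := 0) (g := x) (by simp [hsum])
    exact ⟨j, mem_filter.2 ⟨mem_univ j, hj⟩⟩
  obtain ⟨b, hb, hfar⟩ := Finset.exists_max_image _ dist hsupp
  have saturated : ∀ j, dist j < dist b → x j = y j := fun j hj => by
    by_contra hne
    obtain ⟨x', hx', hlt⟩ := exists_cost_lt_of_shift hx hj (lt_of_le_of_ne (hxy j) hne)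
      (mem_filter.1 hb).2
    exact (hmin hx').not_gt hlt
  have used_nonneg : ∀ j, 0 ≤ (dist b - dist j) * x j := fun j => by
    rcases (hx0 j).eq_or_lt with h | h
    · simp [← h]
    · exact mul_nonneg (sub_nonneg.2 (hfar j (mem_filter.2 ⟨mem_univ j, h⟩))) h.le
  refine ⟨x, hx, ?_⟩
  calc ∑ j, dist j * x j = dist b - ∑ j, (dist b - dist j) * x j := cost_eq_sub_sum hsum _
    _ ≤ dist b - ∑ j ∈ univ.filter (fun j => dist j < dist b), (dist b - dist j) * x j := by
      gcongr
      · exact fun j _ _ => used_nonneg j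
      · exact filter_subset _ _
    _ = greedyBound dist y b := by
      rw [greedyBound]
      congr 1
      exact sum_congr rfl fun j hj => by rw [saturated j (mem_filter.1 hj).2]
    _ ≤ z := hz b

end SingleCustomer

theorem stmt_0_general {I J : Type*} [Fintype J]
    (d : I → J → ℝ)
    (p : ℕ) (hp1 : 1 ≤ p) :
    {yz : (J → ℝ) × ℝ |
        (∑ j, yz.1 j = (p : ℝ)) ∧
        (∀ i j, d i j - ∑ j' ∈ univ.filter (fun j' => d i j' < d i j),
            (d i j - d i j') * yz.1 j' ≤ yz.2) ∧
        (∀ j, 0 ≤ yz.1 j ∧ yz.1 j ≤ 1)} =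
    {yz : (J → ℝ) × ℝ | ∃ x : I → J → ℝ,
        (∑ j, yz.1 j = (p : ℝ)) ∧
        (∀ i, ∑ j, x i j = 1) ∧
        (∀ i j, x i j ≤ yz.1 j) ∧
        (∀ i, ∑ j, d i j * x i j ≤ yz.2) ∧
        (∀ i j, 0 ≤ x i j) ∧
        (∀ j, 0 ≤ yz.1 j ∧ yz.1 j ≤ 1)} := by
  ext ⟨y, z⟩
  constructor
  · rintro ⟨hsum, hbound, hbox⟩
    have hy : 1 ≤ ∑ j, y j := by rw [hsum]; exact_mod_cast hp1
    choose x hx hcost using fun i =>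
      exists_mem_assignments_cost_le (dist := d i) (fun j => (hbox j).1) hy (hbound i)
    simp only [mem_assignments] at hx
    exact ⟨x, hsum, fun i => (hx i).1, fun i => (hx i).2.2, hcost, fun i => (hx i).2.1, hbox⟩
  · rintro ⟨x, hsum, hx1, hxy, hcost, hx0, hbox⟩
    exact ⟨hsum, fun i j => (greedyBound_le_cost
      (mem_assignments.2 ⟨hx1 i, hx0 i, hxy i⟩) j).trans (hcost i), hbox⟩

/-- The feasible region `P(PC2)` is exactly the projection of `P(PC1)`
onto the `(y, z)`-variables. -/
theorem stmt_0 {I J : Type*} [Fintype I] [Fintype J] [Nonempty I] [Nonempty J]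
    (d : I → J → ℝ) (hd : ∀ i j, 0 ≤ d i j)
    (p : ℕ) (hp1 : 1 ≤ p) (hp2 : p ≤ Fintype.card J) :
    {yz : (J → ℝ) × ℝ |
        (∑ j, yz.1 j = (p : ℝ)) ∧
        (∀ i j, d i j - ∑ j' ∈ univ.filter (fun j' => d i j' < d i j),
            (d i j - d i j') * yz.1 j' ≤ yz.2) ∧
        (∀ j, 0 ≤ yz.1 j ∧ yz.1 j ≤ 1)} =
    {yz : (J → ℝ) × ℝ | ∃ x : I → J → ℝ,
        (∑ j, yz.1 j = (p : ℝ)) ∧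
        (∀ i, ∑ j, x i j = 1) ∧
        (∀ i j, x i j ≤ yz.1 j) ∧
        (∀ i, ∑ j, d i j * x i j ≤ yz.2) ∧
        (∀ i j, 0 ≤ x i j) ∧
        (∀ j, 0 ≤ yz.1 j ∧ yz.1 j ≤ 1)} :=
  stmt_0_general d p hp1
end

section
/- The optimal (minimal) values of z over P(PC1) and over P(PC2) coincide. Moreover, a pair (y*, z*) attains the minimum of z over P(PC2) if and only if there exists x* : I × J → ℝ such that (x*, y*, z*) attains the minimum of z over P(PC1). -/
/-!
For a customer `i`, the PC2 constraints say exactly that the cheapest fractional assignment of `i`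
within the capacities `y` costs at most `z`. Any `x ≤ y` with `∑ⱼ xᵢⱼ = 1` costs at least
`t - ∑_{dᵢⱼ' < t} (t - dᵢⱼ') yⱼ'` for every `t` (a weak duality bound), and the greedy assignment
that serves `i` from its nearest facilities first attains this bound at the threshold distance
where the capacities reach `1`. Hence `(x, y, z) ↦ (y, z)` maps `P(PC1)` onto `P(PC2)`, which gives
both claims.
-/

open Finset

/-- The feasible region of the LP-relaxation of PC1. -/
def PC1Feas {I J : Type*} [Fintype I] [Fintype J] (d : I → J → ℝ) (p : ℕ)
    (x : I → J → ℝ) (y : J → ℝ) (z : ℝ) : Prop :=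
  (∑ j, y j = (p : ℝ)) ∧
  (∀ i, ∑ j, x i j = 1) ∧
  (∀ i j, x i j ≤ y j) ∧
  (∀ i, ∑ j, d i j * x i j ≤ z) ∧
  (∀ i j, 0 ≤ x i j) ∧
  (∀ j, 0 ≤ y j ∧ y j ≤ 1)

/-- The feasible region of the LP-relaxation of PC2. -/
def PC2Feas {I J : Type*} [Fintype I] [Fintype J] (d : I → J → ℝ) (p : ℕ)
    (y : J → ℝ) (z : ℝ) : Prop :=
  (∑ j, y j = (p : ℝ)) ∧
  (∀ i j, d i j - ∑ j' ∈ univ.filter (fun j' => d i j' < d i j),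
      (d i j - d i j') * y j' ≤ z) ∧
  (∀ j, 0 ≤ y j ∧ y j ≤ 1)

section Assignment

variable {J : Type*} [Fintype J] (f : J → ℝ) {x y : J → ℝ}

lemma sum_sub_mul_eq_sub_sum_mul (hx : ∑ j, x j = 1) (t : ℝ) :
    ∑ j, (t - f j) * x j = t - ∑ j, f j * x j := by
  simp only [sub_mul, sum_sub_distrib, ← mul_sum, hx, mul_one]

lemma sub_sum_filter_lt_le_sum_mul (hx : ∑ j, x j = 1) (hx0 : ∀ j, 0 ≤ x j)
    (hxy : ∀ j, x j ≤ y j) (t : ℝ) :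
    t - ∑ j ∈ univ.filter (fun j => f j < t), (t - f j) * y j ≤ ∑ j, f j * x j := by
  have hlow : ∑ j ∈ univ.filter (fun j => f j < t), (t - f j) * x j
      ≤ ∑ j ∈ univ.filter (fun j => f j < t), (t - f j) * y j :=
    sum_le_sum fun j hj =>
      mul_le_mul_of_nonneg_left (hxy j) (sub_nonneg.2 (mem_filter.1 hj).2.le)
  have hhigh : ∑ j ∈ univ.filter (fun j => ¬ f j < t), (t - f j) * x j ≤ 0 :=
    sum_nonpos fun j hj =>
      mul_nonpos_of_nonpos_of_nonneg (sub_nonpos.2 (not_lt.1 (mem_filter.1 hj).2)) (hx0 j)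
  have hsplit := sum_filter_add_sum_filter_not univ (fun j => f j < t) fun j => (t - f j) * x j
  rw [sum_sub_mul_eq_sub_sum_mul f hx] at hsplit
  linarith

lemma sum_mul_eq_sub_sum_filter_lt (hx : ∑ j, x j = 1) (t : ℝ)
    (hlt : ∀ j, f j < t → x j = y j) (hgt : ∀ j, t < f j → x j = 0) :
    ∑ j, f j * x j = t - ∑ j ∈ univ.filter (fun j => f j < t), (t - f j) * y j := by
  have hrest : ∑ j ∈ univ.filter (fun j => ¬ f j < t), (t - f j) * x j = 0 := by
    refine sum_eq_zero fun j hj => ?_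
    rcases (not_lt.1 (mem_filter.1 hj).2).eq_or_lt with h | h
    · simp [h]
    · simp [hgt j h]
  have hsplit := sum_filter_add_sum_filter_not univ (fun j => f j < t) fun j => (t - f j) * x j
  rw [sum_sub_mul_eq_sub_sum_mul f hx, hrest, add_zero,
    sum_congr rfl fun j hj => by rw [hlt j (mem_filter.1 hj).2]] at hsplit
  linarith

lemma exists_threshold (hy0 : ∀ j, 0 ≤ y j) (hy1 : 1 ≤ ∑ j, y j) :
    ∃ j₀, ∑ j ∈ univ.filter (fun j => f j < f j₀), y j < 1 ∧
      1 ≤ ∑ j ∈ univ.filter (fun j => f j ≤ f j₀), y j := by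
  set A := univ.filter fun j₀ => 1 ≤ ∑ j ∈ univ.filter (fun j => f j ≤ f j₀), y j
  have hA : A.Nonempty := by
    obtain ⟨jmax, -, hjmax⟩ :=
      exists_max_image univ f (nonempty_of_sum_ne_zero (f := y) (by linarith))
    refine ⟨jmax, mem_filter.2 ⟨mem_univ _, ?_⟩⟩
    rwa [filter_true_of_mem fun j _ => hjmax j (mem_univ j)]
  obtain ⟨j₀, hj₀A, hj₀min⟩ := exists_min_image A f hA
  refine ⟨j₀, ?_, (mem_filter.1 hj₀A).2⟩
  by_contra! hbelow
  obtain ⟨j₁, hj₁, hj₁max⟩ := exists_max_image (univ.filter fun j => f j < f j₀) f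
    (nonempty_of_sum_ne_zero (f := y) (by linarith))
  have hj₁A : j₁ ∈ A := by
    refine mem_filter.2 ⟨mem_univ _, hbelow.trans (sum_le_sum_of_subset_of_nonneg ?_ ?_)⟩
    · exact fun j hj => mem_filter.2 ⟨mem_univ _, hj₁max j hj⟩
    · exact fun j _ _ => hy0 j
  exact (hj₀min j₁ hj₁A).not_gt (mem_filter.1 hj₁).2

/-- Greedy assignment: exhaust the budgets strictly cheaper than the threshold `f j₀` and share
the residual demand proportionally among the budgets at the threshold. -/
lemma exists_assignment (hy0 : ∀ j, 0 ≤ y j) (hy1 : 1 ≤ ∑ j, y j) {z : ℝ}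
    (hz : ∀ j₀, f j₀ - ∑ j ∈ univ.filter (fun j => f j < f j₀), (f j₀ - f j) * y j ≤ z) :
    ∃ x : J → ℝ, ∑ j, x j = 1 ∧ (∀ j, 0 ≤ x j ∧ x j ≤ y j) ∧ ∑ j, f j * x j ≤ z := by
  classical
  obtain ⟨j₀, hT, hTS⟩ := exists_threshold f hy0 hy1
  set r := f j₀
  set T := ∑ j ∈ univ.filter (fun j => f j < r), y j
  set S := ∑ j ∈ univ.filter (fun j => f j = r), y j
  have hsplit : ∑ j ∈ univ.filter (fun j => f j ≤ r), y j = T + S := by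
    rw [← sum_union (disjoint_filter.2 fun j _ h => h.ne)]
    exact sum_congr (by ext j; simp [le_iff_lt_or_eq]) fun _ _ => rfl
  have hS : 0 < S := by linarith
  set c := (1 - T) / S
  have hc0 : 0 ≤ c := div_nonneg (by linarith) hS.le
  have hc1 : c ≤ 1 := (div_le_one hS).2 (by linarith)
  have hcS : c * S = 1 - T := div_mul_cancel₀ _ hS.ne'
  set x : J → ℝ := fun j => if f j < r then y j else if f j = r then c * y j else 0
  have hties (j : J) : ¬ f j < r ∧ f j = r ↔ f j = r := and_iff_right_of_imp fun h => h.not_lt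
  have hx : ∑ j, x j = 1 := by
    have hx_sum : ∑ j, x j = T + c * S := by
      simp only [x, sum_ite, sum_const_zero, add_zero, filter_filter, hties, ← mul_sum, T, S]
    linarith
  refine ⟨x, hx, fun j => ?_, ?_⟩
  · have := hy0 j
    simp only [x]
    split_ifs <;> constructor <;> nlinarith
  · rw [sum_mul_eq_sub_sum_filter_lt f hx r (fun j h => if_pos h)
      fun j h => by simp [x, h.not_gt, h.ne']]
    exact hz j₀

end Assignment

lemma PC1Feas.pc2Feas {I J : Type*} [Fintype I] [Fintype J] {d : I → J → ℝ} {p : ℕ}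
    {x : I → J → ℝ} {y : J → ℝ} {z : ℝ} (h : PC1Feas d p x y z) : PC2Feas d p y z := by
  obtain ⟨hy, hx1, hxy, hxz, hx0, hy01⟩ := h
  exact ⟨hy, fun i j =>
    (sub_sum_filter_lt_le_sum_mul (d i) (hx1 i) (hx0 i) (hxy i) (d i j)).trans (hxz i), hy01⟩

lemma PC2Feas.exists_pc1Feas {I J : Type*} [Fintype I] [Fintype J] {d : I → J → ℝ} {p : ℕ}
    (hp : 1 ≤ p) {y : J → ℝ} {z : ℝ} (h : PC2Feas d p y z) : ∃ x, PC1Feas d p x y z := by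
  obtain ⟨hy, hzc, hy01⟩ := h
  have hy1 : (1 : ℝ) ≤ ∑ j, y j := by rw [hy]; exact_mod_cast hp
  choose x hx1 hxy hxz using fun i => exists_assignment (d i) (fun j => (hy01 j).1) hy1 (hzc i)
  exact ⟨x, hy, hx1, fun i j => (hxy i j).2, hxz, fun i j => (hxy i j).1, hy01⟩

lemma exists_pc1Feas_iff {I J : Type*} [Fintype I] [Fintype J] {d : I → J → ℝ} {p : ℕ}
    (hp : 1 ≤ p) {y : J → ℝ} {z : ℝ} : (∃ x, PC1Feas d p x y z) ↔ PC2Feas d p y z :=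
  ⟨fun ⟨_, h⟩ => h.pc2Feas, PC2Feas.exists_pc1Feas hp⟩

theorem stmt_1_general {I J : Type*} [Fintype I] [Fintype J]
    (d : I → J → ℝ)
    (p : ℕ) (hp1 : 1 ≤ p) :
    sInf {z : ℝ | ∃ x y, PC1Feas d p x y z} = sInf {z : ℝ | ∃ y, PC2Feas d p y z} ∧
    ∀ (y : J → ℝ) (z : ℝ),
      ((PC2Feas d p y z ∧ ∀ (y' : J → ℝ) (z' : ℝ), PC2Feas d p y' z' → z ≤ z') ↔
        ∃ x : I → J → ℝ, PC1Feas d p x y z ∧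
          ∀ (x' : I → J → ℝ) (y' : J → ℝ) (z' : ℝ), PC1Feas d p x' y' z' → z ≤ z') := by
  have hproj (y z) := exists_pc1Feas_iff (d := d) hp1 (y := y) (z := z)
  refine ⟨by simp only [exists_comm (α := I → J → ℝ), hproj], fun y z => ?_⟩
  rw [exists_and_right, hproj]
  refine and_congr_right fun _ => ⟨fun hmin x' y' z' h' => hmin y' z' h'.pc2Feas, ?_⟩
  intro hmin y' z' h'
  obtain ⟨x', hx'⟩ := h'.exists_pc1Feas hp1
  exact hmin x' y' z' hx'

/-- The optimal (minimal) values of `z` over `P(PC1)` and `P(PC2)` coincide,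
and `(y*, z*)` attains the minimum of `z` over `P(PC2)` iff some `(x*, y*, z*)` attains the
minimum of `z` over `P(PC1)`. -/
theorem stmt_1 {I J : Type*} [Fintype I] [Fintype J] [Nonempty I] [Nonempty J]
    (d : I → J → ℝ) (hd : ∀ i j, 0 ≤ d i j)
    (p : ℕ) (hp1 : 1 ≤ p) (hp2 : p ≤ Fintype.card J) :
    sInf {z : ℝ | ∃ x y, PC1Feas d p x y z} = sInf {z : ℝ | ∃ y, PC2Feas d p y z} ∧
    ∀ (y : J → ℝ) (z : ℝ),
      ((PC2Feas d p y z ∧ ∀ (y' : J → ℝ) (z' : ℝ), PC2Feas d p y' z' → z ≤ z') ↔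
        ∃ x : I → J → ℝ, PC1Feas d p x y z ∧
          ∀ (x' : I → J → ℝ) (y' : J → ℝ) (z' : ℝ), PC1Feas d p x' y' z' → z ≤ z') :=
  stmt_1_general d p hp1
end

section
/- For every feasible solution (x, y, z) of PC1-Rx there exists x̃ with x̃_{ij} ∈ {0, 1} for all i ∈ I, j ∈ J such that (x̃, y, z) is integer-feasible for PC1; in particular both solutions have the same objective value z. -/
/-!
Send each customer `i` entirely to the closest facility among those that serve it fractionally.
That facility is open because `x ≤ y` and `y` is binary, and its distance is at most the
`x i`-weighted average distance, which is bounded by `z`.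
-/

open Finset

theorem exists_pos_le_sum_mul {ι R : Type*} [Fintype ι] [Semiring R] [LinearOrder R]
    [IsStrictOrderedRing R] (w c : ι → R) (hw0 : ∀ j, 0 ≤ w j) (hw1 : ∑ j, w j = 1) :
    ∃ j, 0 < w j ∧ c j ≤ ∑ j, c j * w j := by
  classical
  have hsupp : (univ.filter fun j => 0 < w j).Nonempty := by
    by_contra! hempty
    have hzero : ∑ j, w j = 0 := sum_eq_zero fun j _ =>
      le_antisymm (not_lt.1 (filter_eq_empty_iff.1 hempty (mem_univ j))) (hw0 j)
    exact one_ne_zero (hw1.symm.trans hzero)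
  obtain ⟨j₀, hj₀, hmin⟩ := exists_min_image _ c hsupp
  refine ⟨j₀, (mem_filter.1 hj₀).2, ?_⟩
  calc c j₀ = ∑ j, c j₀ * w j := by rw [← mul_sum, hw1, mul_one]
    _ ≤ ∑ j, c j * w j := sum_le_sum fun j _ => by
      rcases (hw0 j).lt_or_eq with hpos | hzero
      · exact mul_le_mul_of_nonneg_right (hmin j (mem_filter.2 ⟨mem_univ j, hpos⟩)) (hw0 j)
      · simp [← hzero]

theorem stmt_2_general {I J : Type*} [Fintype I] [Fintype J]
    (d : I → J → ℝ)
    (p : ℕ)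
    (x : I → J → ℝ) (y : J → ℝ) (z : ℝ)
    (hybin : ∀ j, y j = 0 ∨ y j = 1)
    (hysum : ∑ j, y j = (p : ℝ))
    (hxsum : ∀ i, ∑ j, x i j = 1)
    (hxy : ∀ i j, x i j ≤ y j)
    (hdz : ∀ i, ∑ j, d i j * x i j ≤ z)
    (hx0 : ∀ i j, 0 ≤ x i j) :
    ∃ xt : I → J → ℝ,
      (∀ i j, xt i j = 0 ∨ xt i j = 1) ∧
      (∀ j, y j = 0 ∨ y j = 1) ∧
      (∑ j, y j = (p : ℝ)) ∧
      (∀ i, ∑ j, xt i j = 1) ∧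
      (∀ i j, xt i j ≤ y j) ∧
      (∀ i, ∑ j, d i j * xt i j ≤ z) := by
  classical
  choose f hf_pos hf_le using fun i => exists_pos_le_sum_mul (x i) (d i) (hx0 i) (hxsum i)
  have hy_open : ∀ i, y (f i) = 1 := fun i =>
    (hybin (f i)).resolve_left ((hf_pos i).trans_le (hxy i (f i))).ne'
  have hy_nonneg : ∀ j, 0 ≤ y j := fun j => by rcases hybin j with h | h <;> simp [h]
  refine ⟨fun i j => if j = f i then 1 else 0, fun i j => ?_, hybin, hysum, fun i => by simp,
    fun i j => ?_, fun i => by simpa [mul_ite] using (hf_le i).trans (hdz i)⟩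
  · by_cases h : j = f i <;> simp [h]
  · by_cases h : j = f i <;> simp [h, hy_open, hy_nonneg]

/-- For every feasible solution `(x, y, z)` of PC1-Rx there exists a binary `x̃`
such that `(x̃, y, z)` is integer-feasible for PC1; in particular both solutions have the same
objective value `z`. -/
theorem stmt_2 {I J : Type*} [Fintype I] [Fintype J] [Nonempty I] [Nonempty J]
    (d : I → J → ℝ) (hd : ∀ i j, 0 ≤ d i j)
    (p : ℕ) (hp1 : 1 ≤ p) (hp2 : p ≤ Fintype.card J)
    (x : I → J → ℝ) (y : J → ℝ) (z : ℝ)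
    (hybin : ∀ j, y j = 0 ∨ y j = 1)
    (hysum : ∑ j, y j = (p : ℝ))
    (hxsum : ∀ i, ∑ j, x i j = 1)
    (hxy : ∀ i j, x i j ≤ y j)
    (hdz : ∀ i, ∑ j, d i j * x i j ≤ z)
    (hx0 : ∀ i j, 0 ≤ x i j) :
    ∃ xt : I → J → ℝ,
      (∀ i j, xt i j = 0 ∨ xt i j = 1) ∧
      (∀ j, y j = 0 ∨ y j = 1) ∧
      (∑ j, y j = (p : ℝ)) ∧
      (∀ i, ∑ j, xt i j = 1) ∧
      (∀ i j, xt i j ≤ y j) ∧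
      (∀ i, ∑ j, d i j * xt i j ≤ z) :=
  stmt_2_general d p x y z hybin hysum hxsum hxy hdz hx0
end

section
/- The optimal objective function values of the integer programs PC1 and PC2 coincide, i.e. OPT(PC1) = OPT(PC2). Moreover, a binary vector y* with Σ_{j∈J} y*_j = p is part of an optimal integer-feasible solution of PC1 if and only if it is part of an optimal integer-feasible solution of PC2. -/
open Finset

/-- Integer feasibility for the IP formulation PC1. -/
def PC1Int {I J : Type*} [Fintype I] [Fintype J] (d : I → J → ℝ) (p : ℕ)
    (x : I → J → ℝ) (y : J → ℝ) (z : ℝ) : Prop :=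
  (∀ i j, x i j = 0 ∨ x i j = 1) ∧
  (∀ j, y j = 0 ∨ y j = 1) ∧
  (∑ j, y j = (p : ℝ)) ∧
  (∀ i, ∑ j, x i j = 1) ∧
  (∀ i j, x i j ≤ y j) ∧
  (∀ i, ∑ j, d i j * x i j ≤ z)

/-- Integer feasibility for the IP formulation PC2. -/
def PC2Int {I J : Type*} [Fintype I] [Fintype J] (d : I → J → ℝ) (p : ℕ)
    (y : J → ℝ) (z : ℝ) : Prop :=
  (∀ j, y j = 0 ∨ y j = 1) ∧
  (∑ j, y j = (p : ℝ)) ∧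
  (∀ i j, d i j - ∑ j' ∈ univ.filter (fun j' => d i j' < d i j),
      (d i j - d i j') * y j' ≤ z)

/-! Both formulations say exactly that every customer lies within distance `z` of some open
facility. For PC1 the assignment row of a customer is the indicator of one open facility. For
PC2, the constraint for `(i, j)` is at most `d i j₀` for any open `j₀` (either `d i j ≤ d i j₀`, or
the term of `j₀` alone brings it down to `d i j₀`), and for the closest open facility `j₀` it
equals `d i j₀`, since no open facility is strictly closer. -/

section

variable {J : Type*}

lemma nonneg_of_binary {y : J → ℝ} (hy : ∀ j, y j = 0 ∨ y j = 1) (j : J) : 0 ≤ y j := by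
  rcases hy j with h | h <;> simp [h]

lemma exists_eq_one_of_binary_of_sum_pos [Fintype J] {y : J → ℝ} (hy : ∀ j, y j = 0 ∨ y j = 1)
    (hsum : 0 < ∑ j, y j) : ∃ j, y j = 1 := by
  by_contra! h
  have : ∑ j, y j = 0 := sum_eq_zero fun j _ => (hy j).resolve_right (h j)
  linarith

lemma exists_eq_ite_of_binary_of_sum_eq_one [Fintype J] [DecidableEq J] {f : J → ℝ}
    (hf : ∀ j, f j = 0 ∨ f j = 1) (hsum : ∑ j, f j = 1) :
    ∃ j₀, ∀ j, f j = if j = j₀ then 1 else 0 := by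
  obtain ⟨j₀, hj₀⟩ := exists_eq_one_of_binary_of_sum_pos hf (by linarith)
  have hrest : ∑ j ∈ univ.erase j₀, f j = 0 := by
    linarith [add_sum_erase univ f (mem_univ j₀)]
  refine ⟨j₀, fun j => ?_⟩
  split_ifs with hj
  · rwa [hj]
  · exact (sum_eq_zero_iff_of_nonneg fun j _ => nonneg_of_binary hf j).1 hrest j
      (mem_erase.2 ⟨hj, mem_univ j⟩)

lemma sub_sum_le_of_eq_one [Fintype J] {d y : J → ℝ} (hy : ∀ j, 0 ≤ y j) {j₀ : J}
    (hj₀ : y j₀ = 1) (j : J) :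
    d j - ∑ j' ∈ univ.filter (fun j' => d j' < d j), (d j - d j') * y j' ≤ d j₀ := by
  have hterm : ∀ j' ∈ univ.filter (fun j' => d j' < d j), 0 ≤ (d j - d j') * y j' :=
    fun j' hj' => mul_nonneg (by linarith [(mem_filter.1 hj').2]) (hy j')
  by_cases hlt : d j₀ < d j
  · have := single_le_sum hterm (mem_filter.2 ⟨mem_univ j₀, hlt⟩)
    rw [hj₀, mul_one] at this
    linarith
  · linarith [sum_nonneg hterm]

lemma sum_eq_zero_of_closest [Fintype J] {d y : J → ℝ} (hy : ∀ j, y j = 0 ∨ y j = 1) {j₀ : J}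
    (hmin : ∀ j, y j = 1 → d j₀ ≤ d j) :
    ∑ j' ∈ univ.filter (fun j' => d j' < d j₀), (d j₀ - d j') * y j' = 0 := by
  refine sum_eq_zero fun j' hj' => ?_
  rcases hy j' with h | h
  · simp [h]
  · linarith [hmin j' h, (mem_filter.1 hj').2]

lemma forall_sub_sum_le_iff [Fintype J] {d y : J → ℝ} (hy : ∀ j, y j = 0 ∨ y j = 1)
    (hopen : ∃ j, y j = 1) (z : ℝ) :
    (∀ j, d j - ∑ j' ∈ univ.filter (fun j' => d j' < d j), (d j - d j') * y j' ≤ z) ↔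
      ∃ j₀, y j₀ = 1 ∧ d j₀ ≤ z := by
  classical
  constructor
  · intro h
    have hne : (univ.filter fun j => y j = 1).Nonempty :=
      let ⟨j, hj⟩ := hopen; ⟨j, mem_filter.2 ⟨mem_univ j, hj⟩⟩
    obtain ⟨j₀, hj₀, hmin⟩ := exists_min_image _ d hne
    refine ⟨j₀, (mem_filter.1 hj₀).2, ?_⟩
    have := h j₀
    rwa [sum_eq_zero_of_closest hy fun j hj => hmin j (mem_filter.2 ⟨mem_univ j, hj⟩),
      sub_zero] at this
  · rintro ⟨j₀, hj₀, hz⟩ j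
    exact (sub_sum_le_of_eq_one (nonneg_of_binary hy) hj₀ j).trans hz

end

section

variable {I J : Type*} [Fintype I] [Fintype J] {d : I → J → ℝ} {p : ℕ} {y : J → ℝ} {z : ℝ}

lemma exists_PC1Int_iff :
    (∃ x, PC1Int d p x y z) ↔
      (∀ j, y j = 0 ∨ y j = 1) ∧ ∑ j, y j = p ∧ ∀ i, ∃ j, y j = 1 ∧ d i j ≤ z := by
  classical
  constructor
  · rintro ⟨x, hx, hy, hsum, hrow, hxy, hz⟩
    refine ⟨hy, hsum, fun i => ?_⟩
    obtain ⟨j₀, hj₀⟩ := exists_eq_ite_of_binary_of_sum_eq_one (hx i) (hrow i)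
    refine ⟨j₀, ?_, ?_⟩
    · have := hxy i j₀
      rw [hj₀, if_pos rfl] at this
      exact (hy j₀).resolve_left (by linarith)
    · simpa [hj₀] using hz i
  · rintro ⟨hy, hsum, hcover⟩
    choose j₀ hj₀ hz using hcover
    refine ⟨fun i j => if j = j₀ i then 1 else 0, fun i j => ?_, hy, hsum, fun i => ?_,
      fun i j => ?_, fun i => ?_⟩
    · dsimp only
      split_ifs <;> simp
    · simp
    · dsimp only
      split_ifs with h
      · rw [h, hj₀]
      · exact nonneg_of_binary hy j
    · simpa using hz i

lemma PC2Int_iff (hp : 1 ≤ p) :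
    PC2Int d p y z ↔
      (∀ j, y j = 0 ∨ y j = 1) ∧ ∑ j, y j = p ∧ ∀ i, ∃ j, y j = 1 ∧ d i j ≤ z := by
  unfold PC2Int
  refine and_congr_right fun hy => and_congr_right fun hsum => forall_congr' fun i => ?_
  have hopen := exists_eq_one_of_binary_of_sum_pos hy (by rw [hsum]; exact_mod_cast hp)
  exact forall_sub_sum_le_iff hy hopen z

lemma exists_PC1Int_iff_PC2Int (hp : 1 ≤ p) : (∃ x, PC1Int d p x y z) ↔ PC2Int d p y z :=
  exists_PC1Int_iff.trans (PC2Int_iff hp).symm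

end

theorem stmt_3_general {I J : Type*} [Fintype I] [Fintype J]
    (d : I → J → ℝ) (p : ℕ) (hp1 : 1 ≤ p) :
    sInf {z : ℝ | ∃ x y, PC1Int d p x y z} = sInf {z : ℝ | ∃ y, PC2Int d p y z} ∧
    ∀ y : J → ℝ, (∀ j, y j = 0 ∨ y j = 1) → (∑ j, y j = (p : ℝ)) →
      ((∃ x z, PC1Int d p x y z ∧
          ∀ (x' : I → J → ℝ) (y' : J → ℝ) (z' : ℝ), PC1Int d p x' y' z' → z ≤ z') ↔
        (∃ z, PC2Int d p y z ∧
          ∀ (y' : J → ℝ) (z' : ℝ), PC2Int d p y' z' → z ≤ z')) := by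
  have key : ∀ y z, (∃ x, PC1Int d p x y z) ↔ PC2Int d p y z :=
    fun _ _ => exists_PC1Int_iff_PC2Int hp1
  have lower_bound_iff : ∀ z : ℝ, (∀ (x' : I → J → ℝ) (y' : J → ℝ) (z' : ℝ),
      PC1Int d p x' y' z' → z ≤ z') ↔ ∀ (y' : J → ℝ) (z' : ℝ), PC2Int d p y' z' → z ≤ z' := by
    intro z
    simp only [← key, forall_exists_index]
    exact ⟨fun h y' z' x' => h x' y' z', fun h x' y' z' => h y' z' x'⟩
  refine ⟨?_, fun y _ _ => ?_⟩
  · congr 1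
    ext z
    simp only [Set.mem_ofPred_eq, ← key]
    exact exists_comm
  · simp only [lower_bound_iff]
    constructor
    · rintro ⟨x, z, h, hopt⟩
      exact ⟨z, (key y z).1 ⟨x, h⟩, hopt⟩
    · rintro ⟨z, h, hopt⟩
      obtain ⟨x, hx⟩ := (key y z).2 h
      exact ⟨x, z, hx, hopt⟩

/-- `OPT(PC1) = OPT(PC2)`, and a binary vector `y*` with `Σ y*_j = p` is part of an
optimal integer-feasible solution of PC1 iff it is part of an optimal integer-feasible solution
of PC2. -/
theorem stmt_3 {I J : Type*} [Fintype I] [Fintype J] [Nonempty I] [Nonempty J]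
    (d : I → J → ℝ) (hd : ∀ i j, 0 ≤ d i j)
    (p : ℕ) (hp1 : 1 ≤ p) (hp2 : p ≤ Fintype.card J) :
    sInf {z : ℝ | ∃ x y, PC1Int d p x y z} = sInf {z : ℝ | ∃ y, PC2Int d p y z} ∧
    ∀ y : J → ℝ, (∀ j, y j = 0 ∨ y j = 1) → (∑ j, y j = (p : ℝ)) →
      ((∃ x z, PC1Int d p x y z ∧
          ∀ (x' : I → J → ℝ) (y' : J → ℝ) (z' : ℝ), PC1Int d p x' y' z' → z ≤ z') ↔
        (∃ z, PC2Int d p y z ∧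
          ∀ (y' : J → ℝ) (z' : ℝ), PC2Int d p y' z' → z ≤ z')) :=
  stmt_3_general d p hp1
end

section
/- For every subset S ⊆ J with |S| = p, the pair (y^S, z^S), where y^S is the 0-1 indicator vector of S and z^S = max_{i∈I} min_{j∈S} d_{ij}, is integer-feasible for PC2; that is, the constraints of PC2 never overestimate the distance of a customer to its nearest open facility. -/
open Finset

/-! Every summand of a PC2 constraint is a nonnegative saving `d i j - d i j'` of an open `j'`
closer than `j`, and if some open `j₀` is closer than `j`, its saving alone brings the
right-hand side down to `d i j₀`. -/

section Indicator

variable {J : Type*} [Fintype J] [DecidableEq J]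

lemma sub_sum_filter_lt_mul_indicator_le (f : J → ℝ) {S : Finset J} (j : J) {j₀ : J}
    (hj₀ : j₀ ∈ S) :
    f j - ∑ j' ∈ univ.filter (fun j' => f j' < f j), (f j - f j') * (if j' ∈ S then 1 else 0)
      ≤ f j₀ := by
  have hnonneg : ∀ j' ∈ univ.filter (fun j' => f j' < f j),
      0 ≤ (f j - f j') * (if j' ∈ S then 1 else 0) := by
    intro j' hj'
    have hlt : f j' < f j := (mem_filter.mp hj').2
    split_ifs <;> nlinarith
  rcases lt_or_ge (f j₀) (f j) with hlt | hge
  · have hsaving := single_le_sum hnonneg (mem_filter.mpr ⟨mem_univ j₀, hlt⟩)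
    simp only [hj₀, if_true, mul_one] at hsaving
    linarith
  · linarith [sum_nonneg hnonneg]

lemma sub_sum_filter_lt_mul_indicator_le_inf' (f : J → ℝ) {S : Finset J} (hS : S.Nonempty)
    (j : J) :
    f j - ∑ j' ∈ univ.filter (fun j' => f j' < f j), (f j - f j') * (if j' ∈ S then 1 else 0)
      ≤ S.inf' hS f :=
  le_inf' hS f fun _ hj₀ => sub_sum_filter_lt_mul_indicator_le f j hj₀

end Indicator

/-- For every `S ⊆ J` with `|S| = p`, the pair `(y^S, z^S)`, where `y^S` is the
0-1 indicator of `S` and `z^S = max_{i∈I} min_{j∈S} d_{ij}`, is integer-feasible for PC2. -/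
theorem stmt_4 {I J : Type*} [Fintype I] [Fintype J] [Nonempty I] [DecidableEq J]
    (d : I → J → ℝ)
    (p : ℕ) (hp1 : 1 ≤ p)
    (S : Finset J) (hcard : S.card = p) :
    PC2Int d p (fun j => if j ∈ S then (1 : ℝ) else 0)
      (Finset.univ.sup' Finset.univ_nonempty
        (fun i : I => S.inf' (Finset.card_pos.mp (by omega)) (d i))) := by
  refine ⟨fun j => (ite_eq_or_eq _ _ _).symm, by simp [hcard], fun i j => ?_⟩
  exact (sub_sum_filter_lt_mul_indicator_le_inf' (d i) _ j).trans
    (le_sup' (fun i => S.inf' _ (d i)) (mem_univ i))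
end

section
/- For every integer-feasible pair (y, z) of PC2, letting S = {j ∈ J : y_j = 1}, one has z ≥ max_{i∈I} min_{j∈S} d_{ij}; that is, the constraints of PC2 force z to be at least the distance of every customer to its nearest open facility. -/
/-!
Fix a customer `i` and let `j₀` be an open facility nearest to it. Every facility strictly closer
to `i` than `j₀` is closed, so the cut of PC2 indexed by `(i, j₀)` has an empty correction sum and
reads `z ≥ d i j₀`, which is the distance from `i` to its nearest open facility.
-/

open Finset

section NearestOpenFacility

variable {J : Type*} [Fintype J] (c y : J → ℝ)

lemma sum_closer_mul_eq_zero (hbin : ∀ j, y j = 0 ∨ y j = 1) {j₀ : J}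
    (hj₀ : ∀ j, y j = 1 → c j₀ ≤ c j) :
    ∑ j ∈ univ.filter (fun j => c j < c j₀), (c j₀ - c j) * y j = 0 := by
  refine sum_eq_zero fun j hj => ?_
  have hcloser : c j < c j₀ := (mem_filter.mp hj).2
  have hclosed : y j = 0 :=
    (hbin j).resolve_right fun hopen => (hj₀ j hopen).not_gt hcloser
  rw [hclosed, mul_zero]

lemma inf'_open_le_of_cuts (z : ℝ) (hbin : ∀ j, y j = 0 ∨ y j = 1)
    (hopen : (univ.filter (fun j => y j = 1)).Nonempty)
    (hcuts : ∀ j, c j - ∑ j' ∈ univ.filter (fun j' => c j' < c j), (c j - c j') * y j' ≤ z) :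
    (univ.filter (fun j => y j = 1)).inf' hopen c ≤ z := by
  obtain ⟨j₀, hj₀, hj₀_eq⟩ := exists_mem_eq_inf' hopen c
  have hnearest : ∀ j, y j = 1 → c j₀ ≤ c j := fun j hj =>
    hj₀_eq ▸ inf'_le c (mem_filter.mpr ⟨mem_univ j, hj⟩)
  have hcut := hcuts j₀
  rw [sum_closer_mul_eq_zero c y hbin hnearest, sub_zero] at hcut
  rwa [hj₀_eq]

end NearestOpenFacility

/-- For every integer-feasible pair `(y, z)` of PC2, letting
`S = {j ∈ J : y_j = 1}`, one has `z ≥ max_{i∈I} min_{j∈S} d_{ij}`. -/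
theorem stmt_5 {I J : Type*} [Fintype I] [Fintype J] [Nonempty I]
    (d : I → J → ℝ)
    (p : ℕ) (hp1 : 1 ≤ p)
    (y : J → ℝ) (z : ℝ)
    (hbin : ∀ j, y j = 0 ∨ y j = 1)
    (hsum : ∑ j, y j = (p : ℝ))
    (hcuts : ∀ i j, d i j - ∑ j' ∈ univ.filter (fun j' => d i j' < d i j),
        (d i j - d i j') * y j' ≤ z) :
    Finset.univ.sup' Finset.univ_nonempty
      (fun i : I => (univ.filter (fun j => y j = 1)).inf'
        (by
          obtain ⟨j, hj⟩ : ∃ j, y j = 1 := by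
            by_contra h
            push_neg at h
            have h0 : ∀ j, y j = 0 := fun j => (hbin j).resolve_right (h j)
            rw [Finset.sum_congr rfl (fun j _ => h0 j), Finset.sum_const_zero] at hsum
            have hineq : (1 : ℝ) ≤ (p : ℝ) := by exact_mod_cast hp1
            linarith
          exact ⟨j, Finset.mem_filter.mpr ⟨Finset.mem_univ j, hj⟩⟩)
        (d i)) ≤ z :=
  sup'_le _ _ fun i _ => inf'_open_le_of_cuts (d i) y z hbin _ (hcuts i)
end

section
/- Let LB ≥ 0 be a lower bound on OPT(PC2), i.e. LB ≤ OPT(PC2). Then for every i ∈ I and j ∈ J, every integer-feasible pair (y, z) of PC2 satisfies the lifted optimality cut z ≥ max{LB, d_{ij}} − Σ_{j'∈J : d_{ij'} < d_{ij}} (max{LB, d_{ij}} − max{LB, d_{ij'}}) y_{j'}. -/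
open Finset

/-
Let `js` be a nearest open facility to `i`. The PC2 constraint at `(i, js)` has an empty
discount sum, so `d i js ≤ z`; in particular `z ≥ 0`, the set of feasible values is bounded
below and `LB ≤ OPT(PC2) ≤ z`. Hence `max LB (d i js) ≤ z`. In the lifted cut at `(i, j)`, if `js`
is closer than `j` its term alone discounts `max LB (d i j)` down to `max LB (d i js)`; otherwise
no open facility is closer than `j`, the sum vanishes and `max LB (d i j) ≤ max LB (d i js)`.
-/

lemma sum_filter_lt_mul_eq_zero {J : Type*} [Fintype J] {y : J → ℝ}
    (hy : ∀ j, y j = 0 ∨ y j = 1) (f w : J → ℝ) {j : J} (hopen : ∀ j', y j' = 1 → f j ≤ f j') :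
    ∑ j' ∈ univ.filter (fun j' => f j' < f j), w j' * y j' = 0 := by
  refine sum_eq_zero fun j' hj' => ?_
  rcases hy j' with h0 | h1
  · simp [h0]
  · exact absurd (hopen j' h1) (not_le.mpr (mem_filter.mp hj').2)

namespace PC2Int

variable {I J : Type*} [Fintype I] [Fintype J] {d : I → J → ℝ} {p : ℕ} {y : J → ℝ} {z : ℝ}

lemma exists_nearest_open (h : PC2Int d p y z) (hp : 1 ≤ p) (i : I) :
    ∃ js, y js = 1 ∧ ∀ j', y j' = 1 → d i js ≤ d i j' := by
  have hopen : (univ.filter (fun j => y j = 1)).Nonempty := by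
    by_contra hnone
    rw [not_nonempty_iff_eq_empty, filter_eq_empty_iff] at hnone
    have hsum : ∑ j, y j = 0 :=
      sum_eq_zero fun j _ => (h.1 j).resolve_right (hnone (mem_univ j))
    have : (1 : ℝ) ≤ p := by exact_mod_cast hp
    linarith [h.2.1]
  obtain ⟨js, hjs, hmin⟩ := exists_min_image _ (fun j => d i j) hopen
  exact ⟨js, (mem_filter.mp hjs).2, fun j' hj' => hmin j' (mem_filter.mpr ⟨mem_univ j', hj'⟩)⟩

lemma dist_le_of_nearest_open (h : PC2Int d p y z) {i : I} {js : J}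
    (hmin : ∀ j', y j' = 1 → d i js ≤ d i j') : d i js ≤ z := by
  have hc := h.2.2 i js
  rwa [sum_filter_lt_mul_eq_zero h.1 (d i) (fun j' => d i js - d i j') hmin, sub_zero] at hc

lemma nonneg [Nonempty I] (h : PC2Int d p y z) (hd : ∀ i j, 0 ≤ d i j) (hp : 1 ≤ p) :
    0 ≤ z := by
  obtain ⟨i⟩ := ‹Nonempty I›
  obtain ⟨js, -, hmin⟩ := h.exists_nearest_open hp i
  exact (hd i js).trans (h.dist_le_of_nearest_open hmin)

lemma lifted_cut_le (h : PC2Int d p y z) (hp : 1 ≤ p) {LB : ℝ} (hLB : LB ≤ z) (i : I) (j : J) :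
    max LB (d i j) - ∑ j' ∈ univ.filter (fun j' => d i j' < d i j),
        (max LB (d i j) - max LB (d i j')) * y j' ≤ z := by
  obtain ⟨js, hjs, hmin⟩ := h.exists_nearest_open hp i
  have hjs_le : max LB (d i js) ≤ z := max_le hLB (h.dist_le_of_nearest_open hmin)
  by_cases hcloser : d i js < d i j
  · have hmem : js ∈ univ.filter (fun j' => d i j' < d i j) :=
      mem_filter.mpr ⟨mem_univ js, hcloser⟩
    have hterm := single_le_sum
      (f := fun j' => (max LB (d i j) - max LB (d i j')) * y j')
      (fun j' hj' => mul_nonneg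
        (sub_nonneg.mpr (max_le_max le_rfl (mem_filter.mp hj').2.le))
        (by rcases h.1 j' with hy | hy <;> simp [hy]))
      hmem
    simp only [hjs, mul_one] at hterm
    linarith
  · have hopen : ∀ j', y j' = 1 → d i j ≤ d i j' := fun j' hj' =>
      (not_lt.mp hcloser).trans (hmin j' hj')
    rw [sum_filter_lt_mul_eq_zero h.1 (d i) (fun j' => max LB (d i j) - max LB (d i j')) hopen,
      sub_zero]
    exact (max_le_max le_rfl (not_lt.mp hcloser)).trans hjs_le

end PC2Int

theorem stmt_6_general {I J : Type*} [Fintype I] [Fintype J] [Nonempty I]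
    (d : I → J → ℝ) (hd : ∀ i j, 0 ≤ d i j)
    (p : ℕ) (hp1 : 1 ≤ p)
    (LB : ℝ)
    (hLB : LB ≤ sInf {z : ℝ | ∃ y, PC2Int d p y z}) :
    ∀ (i : I) (j : J) (y : J → ℝ) (z : ℝ), PC2Int d p y z →
      max LB (d i j) - ∑ j' ∈ univ.filter (fun j' => d i j' < d i j),
          (max LB (d i j) - max LB (d i j')) * y j' ≤ z := by
  intro i j y z hyz
  have hbdd : BddBelow {z : ℝ | ∃ y, PC2Int d p y z} :=
    ⟨0, fun _ ⟨_, h⟩ => h.nonneg hd hp1⟩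
  exact hyz.lifted_cut_le hp1 (hLB.trans (csInf_le hbdd ⟨y, hyz⟩)) i j

/-- If `0 ≤ LB ≤ OPT(PC2)`, then every integer-feasible pair `(y, z)` of PC2
satisfies the lifted optimality cut for every `i ∈ I` and `j ∈ J`. -/
theorem stmt_6 {I J : Type*} [Fintype I] [Fintype J] [Nonempty I] [Nonempty J]
    (d : I → J → ℝ) (hd : ∀ i j, 0 ≤ d i j)
    (p : ℕ) (hp1 : 1 ≤ p) (hp2 : p ≤ Fintype.card J)
    (LB : ℝ) (hLB0 : 0 ≤ LB)
    (hLB : LB ≤ sInf {z : ℝ | ∃ y, PC2Int d p y z}) :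
    ∀ (i : I) (j : J) (y : J → ℝ) (z : ℝ), PC2Int d p y z →
      max LB (d i j) - ∑ j' ∈ univ.filter (fun j' => d i j' < d i j),
          (max LB (d i j) - max LB (d i j')) * y j' ≤ z :=
  stmt_6_general d hd p hp1 LB hLB
end

section
/- Let LB ≥ 0 be a lower bound on OPT(PC2), i.e. LB ≤ OPT(PC2). Then the linear program PCLB is a relaxation of PC2; in particular its optimal value L(LB) satisfies LB ≤ L(LB) ≤ OPT(PC2), so L(LB) is a lower bound on OPT(PC2) that is at least as large as LB. -/
/-! An integer solution `(y, z)` of PC2 satisfies `d i j₀ ≤ z` for every client `i`, where `j₀` is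
the nearest open facility to `i`. Hence `z ≥ 0`, and in a PCLB constraint with `LB < d i j` either
`d i j ≤ d i j₀ ≤ z`, or `j₀` itself contributes `d i j - max LB (d i j₀) ≥ d i j - z` to the sum,
as soon as `LB ≤ z`. So PC2 solutions with `LB ≤ z` (all of them, when `LB ≤ OPT(PC2)`) are PCLB
solutions, and comparing infima gives `LB ≤ L(LB) ≤ OPT(PC2)`. -/

open Finset

/-- Feasibility for the linear program PCLB. -/
def PCLBFeas {I J : Type*} [Fintype I] [Fintype J] (d : I → J → ℝ) (p : ℕ) (LB : ℝ)
    (y : J → ℝ) (z : ℝ) : Prop :=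
  (∑ j, y j = (p : ℝ)) ∧
  (∀ i j, LB < d i j →
    d i j - ∑ j' ∈ univ.filter (fun j' => d i j' < d i j),
        (d i j - max LB (d i j')) * y j' ≤ z) ∧
  LB ≤ z ∧
  (∀ j, 0 ≤ y j ∧ y j ≤ 1)

section

variable {I J : Type*} [Fintype I] [Fintype J] {d : I → J → ℝ} {p : ℕ} {y : J → ℝ} {z : ℝ}

theorem PC2Int.mem_Icc (h : PC2Int d p y z) (j : J) : y j ∈ Set.Icc (0 : ℝ) 1 := by
  rcases h.1 j with hj | hj <;> simp [hj]

theorem PC2Int.exists_open (h : PC2Int d p y z) (hp : 1 ≤ p) : ∃ j, y j = 1 := by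
  have hsum : ∑ j, y j ≠ 0 := by
    rw [h.2.1]
    exact_mod_cast (Nat.one_le_iff_ne_zero.mp hp)
  obtain ⟨j, -, hj⟩ := exists_ne_zero_of_sum_ne_zero hsum
  exact ⟨j, (h.1 j).resolve_left hj⟩

theorem PC2Int.exists_open_dist_le (h : PC2Int d p y z) (hp : 1 ≤ p) (i : I) :
    ∃ j₀, y j₀ = 1 ∧ d i j₀ ≤ z := by
  obtain ⟨j, hj⟩ := h.exists_open hp
  obtain ⟨j₀, hj₀, hmin⟩ :=
    exists_min_image (univ.filter fun j => y j = 1) (d i) ⟨j, by simp [hj]⟩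
  refine ⟨j₀, (mem_filter.mp hj₀).2, ?_⟩
  have hcloser_closed : ∑ j' ∈ univ.filter (fun j' => d i j' < d i j₀),
      (d i j₀ - d i j') * y j' = 0 := by
    refine sum_eq_zero fun j' hj' => ?_
    rcases h.1 j' with hy | hy
    · simp [hy]
    · exact absurd (mem_filter.mp hj').2 (not_lt.mpr (hmin j' (by simp [hy])))
  simpa [hcloser_closed] using h.2.2 i j₀

theorem PC2Int.nonneg_s7 [Nonempty I] (hd : ∀ i j, 0 ≤ d i j) (hp : 1 ≤ p)
    (h : PC2Int d p y z) : 0 ≤ z := by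
  obtain ⟨j₀, -, hj₀⟩ := h.exists_open_dist_le hp (Classical.arbitrary I)
  exact (hd _ j₀).trans hj₀

theorem PC2Int.pclbFeas {LB : ℝ} (hp : 1 ≤ p) (h : PC2Int d p y z) (hz : LB ≤ z) :
    PCLBFeas d p LB y z := by
  refine ⟨h.2.1, fun i j hij => ?_, hz, fun j => h.mem_Icc j⟩
  have hterm : ∀ j' ∈ univ.filter (fun j' => d i j' < d i j),
      0 ≤ (d i j - max LB (d i j')) * y j' := fun j' hj' =>
    mul_nonneg (sub_nonneg.mpr (max_le hij.le (mem_filter.mp hj').2.le)) (h.mem_Icc j').1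
  obtain ⟨j₀, hy₀, hj₀⟩ := h.exists_open_dist_le hp i
  by_cases hcloser : d i j₀ < d i j
  · have hsingle := single_le_sum hterm (mem_filter.mpr ⟨mem_univ j₀, hcloser⟩)
    rw [hy₀, mul_one] at hsingle
    linarith [max_le hz hj₀]
  · linarith [sum_nonneg hterm]

theorem exists_PC2Int (hd : ∀ i j, 0 ≤ d i j) (hp : p ≤ Fintype.card J) :
    ∃ y z, PC2Int d p y z := by
  classical
  obtain ⟨S, -, hS⟩ := exists_subset_card_eq (s := (univ : Finset J)) (by simpa using hp)
  refine ⟨fun j => if j ∈ S then 1 else 0, ∑ i, ∑ j, d i j, fun j => ?_, ?_, fun i j => ?_⟩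
  · by_cases hj : j ∈ S <;> simp [hj]
  · simp [sum_ite_mem, hS]
  · have hsum : 0 ≤ ∑ j' ∈ univ.filter (fun j' => d i j' < d i j),
        (d i j - d i j') * (if j' ∈ S then 1 else 0) := by
      refine sum_nonneg fun j' hj' => mul_nonneg ?_ (by split_ifs <;> norm_num)
      linarith [(mem_filter.mp hj').2]
    calc d i j - _ ≤ d i j := sub_le_self _ hsum
      _ ≤ ∑ j', d i j' := single_le_sum (fun j' _ => hd i j') (mem_univ j)
      _ ≤ ∑ i', ∑ j', d i' j' :=
        single_le_sum (f := fun i' => ∑ j', d i' j')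
          (fun i' _ => sum_nonneg fun j' _ => hd i' j') (mem_univ i)

end

theorem stmt_7_general {I J : Type*} [Fintype I] [Fintype J] [Nonempty I]
    (d : I → J → ℝ) (hd : ∀ i j, 0 ≤ d i j)
    (p : ℕ) (hp1 : 1 ≤ p) (hp2 : p ≤ Fintype.card J)
    (LB : ℝ)
    (hLB : LB ≤ sInf {z : ℝ | ∃ y, PC2Int d p y z}) :
    (∀ (y : J → ℝ) (z : ℝ), PC2Int d p y z → PCLBFeas d p LB y z) ∧
    LB ≤ sInf {z : ℝ | ∃ y, PCLBFeas d p LB y z} ∧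
    sInf {z : ℝ | ∃ y, PCLBFeas d p LB y z} ≤ sInf {z : ℝ | ∃ y, PC2Int d p y z} := by
  have hbdd : BddBelow {z : ℝ | ∃ y, PC2Int d p y z} :=
    ⟨0, fun _ ⟨_, h⟩ => h.nonneg_s7 hd hp1⟩
  have hrelax : ∀ y z, PC2Int d p y z → PCLBFeas d p LB y z := fun y z h =>
    h.pclbFeas hp1 (hLB.trans (csInf_le hbdd ⟨y, h⟩))
  have hLB_lower : LB ∈ lowerBounds {z : ℝ | ∃ y, PCLBFeas d p LB y z} :=
    fun _ ⟨_, h⟩ => h.2.2.1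
  obtain ⟨y, z, h⟩ := exists_PC2Int hd hp2
  refine ⟨hrelax, le_csInf ⟨z, y, hrelax y z h⟩ hLB_lower,
    csInf_le_csInf ⟨LB, hLB_lower⟩ ⟨z, y, h⟩ ?_⟩
  rintro z ⟨y, h⟩
  exact ⟨y, hrelax y z h⟩

/-- If `0 ≤ LB ≤ OPT(PC2)`, then PCLB is a relaxation of PC2; in particular its
optimal value `L(LB)` satisfies `LB ≤ L(LB) ≤ OPT(PC2)`. -/
theorem stmt_7 {I J : Type*} [Fintype I] [Fintype J] [Nonempty I] [Nonempty J]
    (d : I → J → ℝ) (hd : ∀ i j, 0 ≤ d i j)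
    (p : ℕ) (hp1 : 1 ≤ p) (hp2 : p ≤ Fintype.card J)
    (LB : ℝ) (hLB0 : 0 ≤ LB)
    (hLB : LB ≤ sInf {z : ℝ | ∃ y, PC2Int d p y z}) :
    (∀ (y : J → ℝ) (z : ℝ), PC2Int d p y z → PCLBFeas d p LB y z) ∧
    LB ≤ sInf {z : ℝ | ∃ y, PCLBFeas d p LB y z} ∧
    sInf {z : ℝ | ∃ y, PCLBFeas d p LB y z} ≤ sInf {z : ℝ | ∃ y, PC2Int d p y z} :=
  stmt_7_general d hd p hp1 hp2 LB hLB
end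

section
/- Let LB ≥ 0 and let (y*, z*) be a feasible solution of the linear program PCLB with z* = LB (as is the case for any optimal solution of PCLB when L(LB) = LB). Then Σ_{j∈J : d_{ij} ≤ LB} y*_j ≥ 1 holds for all i ∈ I. -/
open Finset

theorem Finset.filter_lt_eq_filter_le_of_minimal {α β : Type*} [LinearOrder β] (s : Finset α)
    (f : α → β) {c : β} {a : α} (hca : c < f a) (hmin : ∀ b, c < f b → f a ≤ f b) :
    s.filter (fun b => f b < f a) = s.filter (fun b => f b ≤ c) := by
  ext b
  simp only [mem_filter, and_congr_right_iff]
  intro _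
  constructor
  · intro hb
    by_contra! hcb
    exact (hmin b hcb).not_gt hb
  · intro hb
    exact hb.trans_lt hca

theorem PCLBFeas.one_le_sum_of_minimal {I J : Type*} [Fintype I] [Fintype J]
    {d : I → J → ℝ} {p : ℕ} {LB : ℝ} {y : J → ℝ} (hfeas : PCLBFeas d p LB y LB) {i : I} {j₀ : J}
    (hj₀ : LB < d i j₀) (hmin : ∀ j, LB < d i j → d i j₀ ≤ d i j) :
    1 ≤ ∑ j ∈ univ.filter (fun j => d i j ≤ LB), y j := by
  have hcon := hfeas.2.1 i j₀ hj₀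
  have hcoeff : ∀ j ∈ univ.filter (fun j => d i j ≤ LB),
      (d i j₀ - max LB (d i j)) * y j = (d i j₀ - LB) * y j := by
    intro j hj
    rw [max_eq_left (mem_filter.mp hj).2]
  rw [filter_lt_eq_filter_le_of_minimal _ (d i) hj₀ hmin, sum_congr rfl hcoeff, ← mul_sum] at hcon
  have hprod : (d i j₀ - LB) * (1 - ∑ j ∈ univ.filter (fun j => d i j ≤ LB), y j) ≤ 0 := by
    linarith
  linarith [nonpos_of_mul_nonpos_right hprod (sub_pos.mpr hj₀)]

theorem stmt_8_general {I J : Type*} [Fintype I] [Fintype J]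
    (d : I → J → ℝ)
    (p : ℕ) (hp1 : 1 ≤ p)
    (LB : ℝ)
    (y : J → ℝ) (hfeas : PCLBFeas d p LB y LB) :
    ∀ i : I, 1 ≤ ∑ j ∈ univ.filter (fun j => d i j ≤ LB), y j := by
  intro i
  by_cases hall : ∀ j, d i j ≤ LB
  · rw [filter_true_of_mem fun j _ => hall j, hfeas.1]
    exact_mod_cast hp1
  · obtain ⟨j₁, hj₁⟩ := not_forall.mp hall
    obtain ⟨j₀, hj₀, hmin⟩ :=
      exists_min_image (univ.filter fun j => LB < d i j) (d i) ⟨j₁, by simpa using not_le.mp hj₁⟩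
    exact hfeas.one_le_sum_of_minimal (by simpa using hj₀) fun j hj => hmin j (by simpa using hj)

/-- Let `LB ≥ 0` and let `(y*, z*)` be a feasible solution of PCLB with `z* = LB`.
Then `Σ_{j : d_{ij} ≤ LB} y*_j ≥ 1` holds for all `i ∈ I`. -/
theorem stmt_8 {I J : Type*} [Fintype I] [Fintype J] [Nonempty I] [Nonempty J]
    (d : I → J → ℝ) (hd : ∀ i j, 0 ≤ d i j)
    (p : ℕ) (hp1 : 1 ≤ p) (hp2 : p ≤ Fintype.card J)
    (LB : ℝ) (hLB0 : 0 ≤ LB)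
    (y : J → ℝ) (hfeas : PCLBFeas d p LB y LB) :
    ∀ i : I, 1 ≤ ∑ j ∈ univ.filter (fun j => d i j ≤ LB), y j :=
  stmt_8_general d p hp1 LB y hfeas
end

section
/- Let LB ≥ 0, let y : J → ℝ satisfy 0 ≤ y_j ≤ 1 for all j ∈ J, and set z = LB. If Σ_{j'∈J : d_{ij'} ≤ LB} y_{j'} ≥ 1 holds for some i ∈ I, then for this i and every j ∈ J with d_{ij} > LB the inequality z ≥ d_{ij} − Σ_{j'∈J : d_{ij'} < d_{ij}} (d_{ij} − max{LB, d_{ij'}}) y_{j'} holds. -/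
open Finset

theorem sub_le_sum_filter_lt_mul_of_one_le_sum {J : Type*} (s : Finset J) (f y : J → ℝ)
    (hy : ∀ j, 0 ≤ y j) {LB a : ℝ} (ha : LB < a)
    (hcover : 1 ≤ ∑ j ∈ s.filter (fun j => f j ≤ LB), y j) :
    a - LB ≤ ∑ j ∈ s.filter (fun j => f j < a), (a - max LB (f j)) * y j := by
  have hnear_sub : s.filter (fun j => f j ≤ LB) ⊆ s.filter (fun j => f j < a) :=
    monotone_filter_right s fun _ _ hj => hj.trans_lt ha
  calc a - LB ≤ (a - LB) * ∑ j ∈ s.filter (fun j => f j ≤ LB), y j :=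
        le_mul_of_one_le_right (sub_nonneg.2 ha.le) hcover
    _ = ∑ j ∈ s.filter (fun j => f j ≤ LB), (a - max LB (f j)) * y j := by
        rw [mul_sum]
        refine sum_congr rfl fun j hj => ?_
        rw [max_eq_left (mem_filter.1 hj).2]
    _ ≤ ∑ j ∈ s.filter (fun j => f j < a), (a - max LB (f j)) * y j := by
        refine sum_le_sum_of_subset_of_nonneg hnear_sub fun j hj _ => ?_
        exact mul_nonneg (sub_nonneg.2 (max_le ha.le (mem_filter.1 hj).2.le)) (hy j)

theorem stmt_9_general {I J : Type*} [Fintype J]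
    (d : I → J → ℝ)
    (LB : ℝ)
    (y : J → ℝ) (hy : ∀ j, 0 ≤ y j ∧ y j ≤ 1)
    (z : ℝ) (hz : z = LB)
    (i : I) (hi : 1 ≤ ∑ j' ∈ univ.filter (fun j' => d i j' ≤ LB), y j') :
    ∀ j : J, LB < d i j →
      d i j - ∑ j' ∈ univ.filter (fun j' => d i j' < d i j),
          (d i j - max LB (d i j')) * y j' ≤ z := by
  intro j hj
  have := sub_le_sum_filter_lt_mul_of_one_le_sum univ (d i) y (fun j => (hy j).1) hj hi
  linarith

/-- Let `LB ≥ 0`, `0 ≤ y ≤ 1`, and `z = LB`. If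
`Σ_{j' : d_{ij'} ≤ LB} y_{j'} ≥ 1` holds for some `i ∈ I`, then for this `i` and every
`j ∈ J` with `d_{ij} > LB` the corresponding inequality of PCLB holds. -/
theorem stmt_9 {I J : Type*} [Fintype I] [Fintype J] [Nonempty I] [Nonempty J]
    (d : I → J → ℝ) (hd : ∀ i j, 0 ≤ d i j)
    (p : ℕ) (hp1 : 1 ≤ p) (hp2 : p ≤ Fintype.card J)
    (LB : ℝ) (hLB0 : 0 ≤ LB)
    (y : J → ℝ) (hy : ∀ j, 0 ≤ y j ∧ y j ≤ 1)
    (z : ℝ) (hz : z = LB)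
    (i : I) (hi : 1 ≤ ∑ j' ∈ univ.filter (fun j' => d i j' ≤ LB), y j') :
    ∀ j : J, LB < d i j →
      d i j - ∑ j' ∈ univ.filter (fun j' => d i j' < d i j),
          (d i j - max LB (d i j')) * y j' ≤ z :=
  stmt_9_general d LB y hy z hz i hi
end

section
/- Let LB ≥ 0 be a lower bound on OPT(PC2), i.e. LB ≤ OPT(PC2). Then L(LB) = LB holds if and only if there exists a fractional set cover solution with radius LB that uses at most p sets. -/
open Finset

/-!
Feasibility of `z = LB` in PCLB is exactly a fractional cover of radius `LB`: for a customer `i`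
and the nearest facility `j` with `d i j > LB`, the constraint of PCLB reads
`d i j - (d i j - LB) * (∑_{d i j' ≤ LB} y j') ≤ z`, and all other constraints for `i` are
weaker. Covers using fewer than `p` sets are padded up to `p`. Finally `L(LB) = LB` forces
`z = LB` to be feasible, because the LP optimum is attained: it is the minimum of a maximum of
finitely many affine functions of `y` over the compact polytope `{0 ≤ y ≤ 1, ∑ y = p}`.
-/

lemma exists_ge_sum_eq_of_sum_le_card {J : Type*} [Fintype J] {c : ℝ}
    (hc : c ≤ Fintype.card J) {y : J → ℝ} (hy : ∀ j, 0 ≤ y j ∧ y j ≤ 1)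
    (hys : ∑ j, y j ≤ c) :
    ∃ y' : J → ℝ, (∀ j, y j ≤ y' j) ∧ (∀ j, 0 ≤ y' j ∧ y' j ≤ 1) ∧ ∑ j, y' j = c := by
  obtain ⟨t, ⟨ht0, ht1⟩, ht⟩ := intermediate_value_Icc zero_le_one
    (f := fun t : ℝ => ∑ j, (y j + t * (1 - y j))) (by fun_prop)
    ⟨by simpa using hys, by simpa using hc⟩
  refine ⟨fun j => y j + t * (1 - y j), fun j => ?_, fun j => ⟨?_, ?_⟩, ht⟩ <;>
    nlinarith [hy j]

lemma isCompact_setOf_mem_Icc_sum_eq {J : Type*} [Fintype J] (c : ℝ) :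
    IsCompact {y : J → ℝ | (∀ j, 0 ≤ y j ∧ y j ≤ 1) ∧ ∑ j, y j = c} := by
  have hbox : IsCompact (Set.univ.pi fun _ : J => Set.Icc (0 : ℝ) 1) :=
    isCompact_univ_pi fun _ => isCompact_Icc
  have hsum : IsClosed {y : J → ℝ | ∑ j, y j = c} :=
    isClosed_eq (continuous_finsetSum _ fun j _ => continuous_apply j) continuous_const
  convert hbox.inter_right hsum using 1
  ext y
  simp only [Set.mem_inter_iff, Set.mem_pi, Set.mem_univ, Set.mem_Icc, forall_const,
    Set.mem_ofPred_eq]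

theorem Continuous.finset_fold_max {X ι α : Type*} [TopologicalSpace X] [LinearOrder α]
    [TopologicalSpace α] [OrderClosedTopology α] (s : Finset ι) (b : α) {g : ι → X → α}
    (hg : ∀ k ∈ s, Continuous (g k)) : Continuous fun x => s.fold max b (g · x) := by
  classical
  induction s using Finset.induction_on with
  | empty => exact continuous_const
  | insert k s hk ih =>
    simp only [fold_insert hk]
    exact (hg k (mem_insert_self k s)).max (ih fun k' hk' => hg k' (mem_insert_of_mem hk'))

theorem IsCompact.exists_isLeast_setOf_exists_le {X α : Type*} [TopologicalSpace X]
    [LinearOrder α] [TopologicalSpace α] [ClosedIicTopology α] {K : Set X} (hK : IsCompact K)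
    (hne : K.Nonempty) {F : X → α} (hF : ContinuousOn F K) :
    ∃ y₀ ∈ K, IsLeast {z | ∃ y ∈ K, F y ≤ z} (F y₀) := by
  obtain ⟨y₀, hy₀, hmin⟩ := hK.exists_isMinOn hne hF
  exact ⟨y₀, hy₀, ⟨y₀, hy₀, le_rfl⟩, fun z ⟨y, hy, hz⟩ => (hmin hy).trans hz⟩

lemma sum_filter_le_mul_eq {J : Type*} [Fintype J] (r : J → ℝ) (LB D : ℝ) (y : J → ℝ) :
    ∑ j ∈ univ.filter (fun j => r j ≤ LB), (D - max LB (r j)) * y j =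
      (D - LB) * ∑ j ∈ univ.filter (fun j => r j ≤ LB), y j := by
  rw [mul_sum]
  refine sum_congr rfl fun j hj => ?_
  rw [max_eq_left (mem_filter.mp hj).2]

noncomputable section PCLB

variable {I J : Type*} [Fintype J] (d : I → J → ℝ) (LB : ℝ)

def pclbRow (i : I) (j : J) (y : J → ℝ) : ℝ :=
  d i j - ∑ j' ∈ univ.filter (fun j' => d i j' < d i j), (d i j - max LB (d i j')) * y j'

def pclbValue [Fintype I] (y : J → ℝ) : ℝ :=
  (univ.filter fun ij : I × J => LB < d ij.1 ij.2).fold max LB fun ij => pclbRow d LB ij.1 ij.2 y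

variable {d LB}

theorem continuous_pclbValue [Fintype I] : Continuous (pclbValue d LB) :=
  Continuous.finset_fold_max _ _ fun _ _ => by unfold pclbRow; fun_prop

theorem pclbFeas_iff [Fintype I] {p : ℕ} {y : J → ℝ} {z : ℝ} :
    PCLBFeas d p LB y z ↔
      ((∀ j, 0 ≤ y j ∧ y j ≤ 1) ∧ ∑ j, y j = p) ∧ pclbValue d LB y ≤ z := by
  simp only [PCLBFeas, pclbValue, pclbRow, fold_max_le, mem_filter, mem_univ, true_and,
    Prod.forall]
  tauto

lemma pclbRow_le {i : I} {j : J} {y : J → ℝ} (hj : LB < d i j) (hy : ∀ j, 0 ≤ y j) :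
    pclbRow d LB i j y ≤
      d i j - (d i j - LB) * ∑ j' ∈ univ.filter (fun j' => d i j' ≤ LB), y j' := by
  have hsub : univ.filter (fun j' => d i j' ≤ LB) ⊆ univ.filter (fun j' => d i j' < d i j) :=
    fun j' => by simpa using fun h : d i j' ≤ LB => h.trans_lt hj
  have hle := sum_le_sum_of_subset_of_nonneg hsub fun j' hj' _ =>
    mul_nonneg (sub_nonneg.mpr (max_le hj.le (mem_filter.mp hj').2.le)) (hy j')
  rw [sum_filter_le_mul_eq] at hle
  unfold pclbRow
  linarith

lemma pclbRow_eq_of_nearest {i : I} {j : J} (y : J → ℝ) (hj : LB < d i j)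
    (hnear : ∀ j', LB < d i j' → d i j ≤ d i j') :
    pclbRow d LB i j y =
      d i j - (d i j - LB) * ∑ j' ∈ univ.filter (fun j' => d i j' ≤ LB), y j' := by
  have hfilter : univ.filter (fun j' => d i j' < d i j) = univ.filter (fun j' => d i j' ≤ LB) :=
    filter_congr fun j' _ => ⟨fun h => not_lt.mp fun h' => (hnear j' h').not_gt h,
      fun h => h.trans_lt hj⟩
  rw [pclbRow, hfilter, sum_filter_le_mul_eq]

lemma pclbRow_le_of_one_le_sum {i : I} {j : J} {y : J → ℝ} (hj : LB < d i j)
    (hy : ∀ j, 0 ≤ y j) (hcov : 1 ≤ ∑ j' ∈ univ.filter (fun j' => d i j' ≤ LB), y j') :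
    pclbRow d LB i j y ≤ LB := by
  have := pclbRow_le hj hy
  nlinarith

lemma one_le_sum_of_pclbRow_le {p : ℕ} (hp : 1 ≤ p) {i : I} {y : J → ℝ}
    (hsum : ∑ j, y j = p) (hrow : ∀ j, LB < d i j → pclbRow d LB i j y ≤ LB) :
    1 ≤ ∑ j ∈ univ.filter (fun j => d i j ≤ LB), y j := by
  by_cases hfar : ∃ j, LB < d i j
  · obtain ⟨j, hj⟩ := hfar
    obtain ⟨j₀, hj₀, hnear⟩ := exists_min_image (univ.filter fun j => LB < d i j) (d i)
      ⟨j, by simpa using hj⟩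
    have hj₀ : LB < d i j₀ := (mem_filter.mp hj₀).2
    have := hrow j₀ hj₀
    rw [pclbRow_eq_of_nearest y hj₀ fun j' hj' => hnear j' (by simpa using hj')] at this
    nlinarith
  · simp only [not_exists, not_lt] at hfar
    rw [filter_true_of_mem fun j _ => hfar j, hsum]
    exact_mod_cast hp

end PCLB

theorem stmt_10_general {I J : Type*} [Fintype I] [Fintype J]
    (d : I → J → ℝ)
    (p : ℕ) (hp1 : 1 ≤ p) (hp2 : p ≤ Fintype.card J)
    (LB : ℝ) :
    sInf {z : ℝ | ∃ y, PCLBFeas d p LB y z} = LB ↔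
      ∃ y : J → ℝ, (∀ j, 0 ≤ y j ∧ y j ≤ 1) ∧
        (∀ i : I, 1 ≤ ∑ j ∈ univ.filter (fun j => d i j ≤ LB), y j) ∧
        ∑ j, y j ≤ (p : ℝ) := by
  have hpJ : (p : ℝ) ≤ Fintype.card J := by exact_mod_cast hp2
  constructor
  · intro hL
    let P := {y : J → ℝ | (∀ j, 0 ≤ y j ∧ y j ≤ 1) ∧ ∑ j, y j = p}
    have hS : {z : ℝ | ∃ y, PCLBFeas d p LB y z} =
        {z | ∃ y ∈ P, pclbValue d LB y ≤ z} := by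
      simp only [pclbFeas_iff]; rfl
    obtain ⟨_, -, hP⟩ := exists_ge_sum_eq_of_sum_le_card hpJ (y := 0) (by simp) (by simp)
    obtain ⟨y₀, ⟨hy₀01, hy₀sum⟩, hleast⟩ :=
      (isCompact_setOf_mem_Icc_sum_eq (p : ℝ)).exists_isLeast_setOf_exists_le ⟨_, hP⟩
        (continuous_pclbValue (d := d) (LB := LB)).continuousOn
    rw [hS, hleast.csInf_eq] at hL
    have hrow := ((pclbFeas_iff (p := p)).mpr ⟨⟨hy₀01, hy₀sum⟩, hL.le⟩).2.1
    exact ⟨y₀, hy₀01, fun i => one_le_sum_of_pclbRow_le hp1 hy₀sum (hrow i), hy₀sum.le⟩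
  · rintro ⟨y, hy01, hcov, hys⟩
    obtain ⟨y', hyy', hy'01, hy'sum⟩ := exists_ge_sum_eq_of_sum_le_card hpJ hy01 hys
    have hcov' : ∀ i, 1 ≤ ∑ j ∈ univ.filter (fun j => d i j ≤ LB), y' j := fun i =>
      (hcov i).trans (sum_le_sum fun j _ => hyy' j)
    refine IsLeast.csInf_eq ⟨⟨y', hy'sum, fun i j hj => ?_, le_rfl, hy'01⟩,
      fun z ⟨_, _, _, hz, _⟩ => hz⟩
    exact pclbRow_le_of_one_le_sum hj (fun j => (hy'01 j).1) (hcov' i)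

/-- For `0 ≤ LB ≤ OPT(PC2)`, one has `L(LB) = LB` iff there exists a fractional
set cover solution with radius `LB` that uses at most `p` sets. -/
theorem stmt_10 {I J : Type*} [Fintype I] [Fintype J] [Nonempty I] [Nonempty J]
    (d : I → J → ℝ) (hd : ∀ i j, 0 ≤ d i j)
    (p : ℕ) (hp1 : 1 ≤ p) (hp2 : p ≤ Fintype.card J)
    (LB : ℝ) (hLB0 : 0 ≤ LB)
    (hLB : LB ≤ sInf {z : ℝ | ∃ y, PC2Int d p y z}) :
    sInf {z : ℝ | ∃ y, PCLBFeas d p LB y z} = LB ↔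
      ∃ y : J → ℝ, (∀ j, 0 ≤ y j ∧ y j ≤ 1) ∧
        (∀ i : I, 1 ≤ ∑ j ∈ univ.filter (fun j => d i j ≤ LB), y j) ∧
        ∑ j, y j ≤ (p : ℝ) :=
  stmt_10_general d p hp1 hp2 LB
end

section
/- Let LB ≥ 0 be a lower bound on OPT(PC2) with L(LB) = LB. Then L(LB') = LB' holds for all LB' ≥ LB. -/
/-! Write the PCLB constraint of a pair with `d > LB` as
`∑ j', (d - max LB d') * y j' ≥ d - z`. Raising the threshold from `LB` to `LB' ≥ LB` scales the
slack `d - LB` of the target value `z = LB` by `(d - LB') / (d - LB)`, while each coefficient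
shrinks by at most that factor, because `t ↦ (d - max t d') / (d - t)` is nondecreasing on
`t < d`. So a solution of value `LB + ε` for `LB` is a solution of value `LB' + ε` for `LB'`,
and `L(LB) = LB` gives `L(LB') ≤ LB' + ε` for every `ε > 0`. -/

open Finset

/-- The optimal value `L(LB)` of the linear program PCLB. -/
noncomputable def Lval {I J : Type*} [Fintype I] [Fintype J] (d : I → J → ℝ) (p : ℕ)
    (LB : ℝ) : ℝ :=
  sInf {z : ℝ | ∃ y, PCLBFeas d p LB y z}

lemma sub_mul_sub_max_le_sub_mul_sub_max {D e a b : ℝ} (hab : a ≤ b) (hb : b < D)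
    (he : e < D) : (D - b) * (D - max a e) ≤ (D - a) * (D - max b e) := by
  rcases le_total a e with hae | hea <;> rcases le_total b e with hbe | heb
  · rw [max_eq_right hae, max_eq_right hbe]
    nlinarith
  · rw [max_eq_right hae, max_eq_left heb]
    nlinarith
  · rw [max_eq_left hea, max_eq_right hbe]
    nlinarith
  · rw [max_eq_left hea, max_eq_left heb]
    nlinarith

namespace PCLBFeas

variable {I J : Type*} [Fintype I] [Fintype J] {d : I → J → ℝ} {p : ℕ} {LB z : ℝ}
  {y : J → ℝ}

lemma mono (h : PCLBFeas d p LB y z) {z' : ℝ} (hz : z ≤ z') : PCLBFeas d p LB y z' :=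
  ⟨h.1, fun i j hij => (h.2.1 i j hij).trans hz, h.2.2.1.trans hz, h.2.2.2⟩

lemma raise_threshold {ε LB' : ℝ} (h : PCLBFeas d p LB y (LB + ε)) (hε : 0 ≤ ε) (hLB : LB ≤ LB') :
    PCLBFeas d p LB' y (LB' + ε) := by
  obtain ⟨hsum, hcover, -, hbox⟩ := h
  refine ⟨hsum, fun i j hij => ?_, le_add_of_nonneg_right hε, hbox⟩
  set F := univ.filter (fun j' => d i j' < d i j)
  set S := ∑ j' ∈ F, (d i j - max LB (d i j')) * y j'
  set S' := ∑ j' ∈ F, (d i j - max LB' (d i j')) * y j'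
  have hS : d i j - LB - ε ≤ S := by linarith [hcover i j (hLB.trans_lt hij)]
  have hscale : (d i j - LB') * S ≤ (d i j - LB) * S' := by
    simp only [S, S', mul_sum, ← mul_assoc]
    refine sum_le_sum fun j' hj' => mul_le_mul_of_nonneg_right ?_ (hbox j').1
    exact sub_mul_sub_max_le_sub_mul_sub_max hLB hij (mem_filter.1 hj').2
  have hpos : 0 < d i j - LB := by linarith
  have : (d i j - LB) * (d i j - LB' - ε) ≤ (d i j - LB) * S' :=
    calc (d i j - LB) * (d i j - LB' - ε) ≤ (d i j - LB') * (d i j - LB - ε) := by nlinarith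
      _ ≤ (d i j - LB') * S := mul_le_mul_of_nonneg_left hS (by linarith)
      _ ≤ (d i j - LB) * S' := hscale
  linarith [le_of_mul_le_mul_left this hpos]

end PCLBFeas

lemma pclbFeas_uniform {I J : Type*} [Fintype I] [Fintype J] (d : I → J → ℝ) {p : ℕ}
    (hp : p ≤ Fintype.card J) (LB : ℝ) :
    PCLBFeas d p LB (fun _ => (p : ℝ) / Fintype.card J)
      (max LB (∑ ij : I × J, |d ij.1 ij.2|)) := by
  refine ⟨?_, fun i j hij => ?_, le_max_left _ _, fun j => ⟨by positivity, ?_⟩⟩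
  · rcases (Fintype.card J).eq_zero_or_pos with hJ | hJ
    · simp [hJ, show p = 0 by omega]
    · rw [sum_const, card_univ, nsmul_eq_mul]
      field_simp
  · have hcover : 0 ≤ ∑ j' ∈ univ.filter (fun j' => d i j' < d i j),
        (d i j - max LB (d i j')) * ((p : ℝ) / Fintype.card J) :=
      sum_nonneg fun j' hj' => mul_nonneg
        (sub_nonneg.2 (max_le hij.le (mem_filter.1 hj').2.le)) (by positivity)
    have hd : d i j ≤ ∑ ij : I × J, |d ij.1 ij.2| :=
      (le_abs_self _).trans (single_le_sum (f := fun ij : I × J => |d ij.1 ij.2|)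
        (fun _ _ => abs_nonneg _) (mem_univ (i, j)))
    linarith [le_max_right LB (∑ ij : I × J, |d ij.1 ij.2|)]
  · exact div_le_one_of_le₀ (by exact_mod_cast hp) (Nat.cast_nonneg _)

section Lval

variable {I J : Type*} [Fintype I] [Fintype J] {d : I → J → ℝ} {p : ℕ} {LB : ℝ}

lemma Lval_le {y : J → ℝ} {z : ℝ} (h : PCLBFeas d p LB y z) : Lval d p LB ≤ z :=
  csInf_le ⟨LB, fun _ ⟨_, hz⟩ => hz.2.2.1⟩ ⟨y, h⟩

lemma le_Lval {y : J → ℝ} {z : ℝ} (h : PCLBFeas d p LB y z) : LB ≤ Lval d p LB :=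
  le_csInf ⟨z, y, h⟩ <| by
    rintro _ ⟨_, hz⟩
    exact hz.2.2.1

lemma exists_pclbFeas_Lval_add {y : J → ℝ} {z ε : ℝ} (h : PCLBFeas d p LB y z)
    (hε : 0 < ε) : ∃ y, PCLBFeas d p LB y (Lval d p LB + ε) := by
  obtain ⟨z', ⟨y', hy'⟩, hz'⟩ :=
    Real.lt_sInf_add_pos (s := {z | ∃ y, PCLBFeas d p LB y z}) ⟨z, y, h⟩ hε
  exact ⟨y', hy'.mono hz'.le⟩

end Lval

theorem stmt_11_general {I J : Type*} [Fintype I] [Fintype J]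
    (d : I → J → ℝ)
    (p : ℕ) (hp2 : p ≤ Fintype.card J)
    (LB : ℝ)
    (hfix : Lval d p LB = LB) :
    ∀ LB' : ℝ, LB ≤ LB' → Lval d p LB' = LB' := by
  intro LB' hLB'
  refine le_antisymm (le_of_forall_pos_le_add fun ε hε => ?_)
    (le_Lval (pclbFeas_uniform d hp2 LB'))
  obtain ⟨y, hy⟩ := exists_pclbFeas_Lval_add (pclbFeas_uniform d hp2 LB) hε
  rw [hfix] at hy
  exact Lval_le (hy.raise_threshold hε.le hLB')

/-- Let `0 ≤ LB ≤ OPT(PC2)` with `L(LB) = LB`. Then `L(LB') = LB'` holds for all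
`LB' ≥ LB`. -/
theorem stmt_11 {I J : Type*} [Fintype I] [Fintype J] [Nonempty I] [Nonempty J]
    (d : I → J → ℝ) (hd : ∀ i j, 0 ≤ d i j)
    (p : ℕ) (hp1 : 1 ≤ p) (hp2 : p ≤ Fintype.card J)
    (LB : ℝ) (hLB0 : 0 ≤ LB)
    (hLB : LB ≤ sInf {z : ℝ | ∃ y, PC2Int d p y z})
    (hfix : Lval d p LB = LB) :
    ∀ LB' : ℝ, LB ≤ LB' → Lval d p LB' = LB' :=
  stmt_11_general d p hp2 LB hfix
end

section
/- The set {LB ∈ ℝ : L(LB) = LB} is nonempty and has a minimum element LB#, and this minimum LB# belongs to the set D of all distance values. -/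
/-!
Write `c_i(y)` for the weight `y` puts on facilities within distance `LB` of customer `i`. The PCLB
constraint of `i` and of the facility nearest to `i` beyond `LB` reads
`(d_ij - LB) (1 - c_i(y)) ≤ z - LB`, while `c_i(y) ≥ 1 - ε` for every `i` makes all constraints
hold with `z = LB + ε (max d - LB)`. Hence `L(LB) = LB` exactly when, for every `ε > 0`, some
fractional choice of `p` facilities gives every customer coverage at least `1 - ε` (the infimum
is not known to be attained, hence the `ε`). This criterion sees `LB` only through the sets
`{j | d_ij ≤ LB}`, so a fixed point can be lowered to the largest distance value below it; the
finitely many fixed distance values then have a least element, which is the least fixed point.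
-/

open Finset

lemma exists_pos_forall_le_of_pos {ι : Type*} [Finite ι] (f : ι → ℝ) :
    ∃ δ > 0, ∀ k, 0 < f k → δ ≤ f k := by
  rcases {k | 0 < f k}.eq_empty_or_nonempty with h | h
  · exact ⟨1, one_pos, fun k hk => absurd hk (Set.eq_empty_iff_forall_notMem.1 h k)⟩
  · obtain ⟨k₀, hk₀, hmin⟩ := Set.exists_min_image _ f (Set.toFinite _) h
    exact ⟨f k₀, hk₀, hmin⟩

lemma exists_le_iff_le_of_exists_le {ι α : Type*} [Finite ι] [LinearOrder α] (f : ι → α) {r : α}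
    (h : ∃ k, f k ≤ r) : ∃ k₀, f k₀ ≤ r ∧ ∀ k, f k ≤ r ↔ f k ≤ f k₀ := by
  obtain ⟨k₀, hk₀, hmax⟩ := Set.exists_max_image {k | f k ≤ r} f (Set.toFinite _) h
  exact ⟨k₀, hk₀, fun k => ⟨hmax k, fun hk => hk.trans hk₀⟩⟩

lemma exists_isLeast_mem_of_forall_exists_le {α : Type*} [LinearOrder α] {S D : Set α}
    (hD : D.Finite) (hS : S.Nonempty) (h : ∀ x ∈ S, ∃ y ∈ S ∩ D, y ≤ x) :
    ∃ m, IsLeast S m ∧ m ∈ D := by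
  obtain ⟨x, hx⟩ := hS
  obtain ⟨y, hy, -⟩ := h x hx
  obtain ⟨m, ⟨hmS, hmD⟩, hmin⟩ := Set.exists_min_image (S ∩ D) id (hD.inter_of_right S) ⟨y, hy⟩
  refine ⟨m, ⟨hmS, fun x hx => ?_⟩, hmD⟩
  obtain ⟨y, hy, hyx⟩ := h x hx
  exact (hmin y hy).trans hyx

section PCLB

variable {I J : Type*} [Fintype J] {d : I → J → ℝ} {p : ℕ} {r : ℝ}

def IsFracSelection (p : ℕ) (y : J → ℝ) : Prop :=
  ∑ j, y j = (p : ℝ) ∧ ∀ j, 0 ≤ y j ∧ y j ≤ 1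

noncomputable def coverage (d : I → J → ℝ) (r : ℝ) (y : J → ℝ) (i : I) : ℝ :=
  ∑ j ∈ univ.filter (fun j => d i j ≤ r), y j

lemma coverage_eq_of_forall_le {y : J → ℝ} {i : I} (h : ∀ j, d i j ≤ r) :
    coverage d r y i = ∑ j, y j := by
  rw [coverage, Finset.filter_true_of_mem fun j _ => h j]

lemma exists_isFracSelection (hp : p ≤ Fintype.card J) : ∃ y : J → ℝ, IsFracSelection p y := by
  classical
  obtain ⟨s, -, hs⟩ := Finset.exists_subset_card_eq (s := (univ : Finset J)) (by simpa using hp)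
  refine ⟨fun j => if j ∈ s then 1 else 0, ?_, fun j => ?_⟩
  · simp [Finset.sum_ite_mem, hs]
  · by_cases h : j ∈ s <;> simp [h]

lemma mul_coverage_eq_sum (y : J → ℝ) (i : I) {a : ℝ} :
    (a - r) * coverage d r y i =
      ∑ j ∈ univ.filter (fun j => d i j ≤ r), (a - max r (d i j)) * y j := by
  rw [coverage, Finset.mul_sum]
  refine Finset.sum_congr rfl fun j hj => ?_
  rw [max_eq_left (Finset.mem_filter.1 hj).2]

lemma mul_coverage_le_sum {y : J → ℝ} (hy : ∀ j, 0 ≤ y j) {i : I} {j : J} (hj : r < d i j) :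
    (d i j - r) * coverage d r y i ≤
      ∑ j' ∈ univ.filter (fun j' => d i j' < d i j), (d i j - max r (d i j')) * y j' := by
  rw [mul_coverage_eq_sum]
  refine Finset.sum_le_sum_of_subset_of_nonneg
    (fun j' hj' => Finset.mem_filter.2 ⟨mem_univ _, (Finset.mem_filter.1 hj').2.trans_lt hj⟩)
    fun j' hj' _ => ?_
  have hj' := (Finset.mem_filter.1 hj').2
  exact mul_nonneg (sub_nonneg.2 (max_le hj.le hj'.le)) (hy j')

lemma sum_eq_mul_coverage (y : J → ℝ) {i : I} {j : J} (hj : r < d i j)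
    (hnext : ∀ j', r < d i j' → d i j ≤ d i j') :
    ∑ j' ∈ univ.filter (fun j' => d i j' < d i j), (d i j - max r (d i j')) * y j' =
      (d i j - r) * coverage d r y i := by
  have hfilter : univ.filter (fun j' => d i j' < d i j) = univ.filter (fun j' => d i j' ≤ r) :=
    Finset.filter_congr fun j' _ =>
      ⟨fun h => not_lt.1 fun h' => (hnext j' h').not_gt h, fun h => h.trans_lt hj⟩
  rw [hfilter, mul_coverage_eq_sum]

variable [Fintype I]

lemma exists_forall_le (d : I → J → ℝ) : ∃ C, ∀ i j, d i j ≤ C := by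
  obtain ⟨C, hC⟩ := (Set.finite_range fun q : I × J => d q.1 q.2).bddAbove
  exact ⟨C, fun i j => hC ⟨(i, j), rfl⟩⟩

lemma pclbFeas_nonempty (hp : p ≤ Fintype.card J) : {z : ℝ | ∃ y, PCLBFeas d p r y z}.Nonempty := by
  obtain ⟨y, hsum, hy⟩ := exists_isFracSelection hp
  obtain ⟨C, hC⟩ := exists_forall_le d
  refine ⟨max r C, y, hsum, fun i j hj => ?_, le_max_left _ _, hy⟩
  have hcov : 0 ≤ coverage d r y i := Finset.sum_nonneg fun j _ => (hy j).1
  have := (mul_nonneg (sub_nonneg.2 hj.le) hcov).trans (mul_coverage_le_sum (fun j => (hy j).1) hj)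
  linarith [hC i j, le_max_right r C]

lemma lval_le_of_pclbFeas {y : J → ℝ} {z : ℝ} (h : PCLBFeas d p r y z) : Lval d p r ≤ z :=
  csInf_le ⟨r, fun _ ⟨_, h'⟩ => h'.2.2.1⟩ ⟨y, h⟩

lemma le_lval (hp : p ≤ Fintype.card J) : r ≤ Lval d p r :=
  le_csInf (pclbFeas_nonempty hp) fun _ ⟨_, h⟩ => h.2.2.1

lemma pclbFeas_of_coverage {y : J → ℝ} (hy : IsFracSelection p y) {ε M : ℝ} (hε : 0 ≤ ε)
    (hM : 0 ≤ M) (hdM : ∀ i j, d i j ≤ r + M) (hcov : ∀ i, 1 - ε ≤ coverage d r y i) :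
    PCLBFeas d p r y (r + ε * M) := by
  refine ⟨hy.1, fun i j hj => ?_, le_add_of_nonneg_right (mul_nonneg hε hM), hy.2⟩
  have h1 := mul_coverage_le_sum (fun j => (hy.2 j).1) hj
  have h2 := mul_le_mul_of_nonneg_left (hcov i) (sub_nonneg.2 hj.le)
  have h3 := mul_le_mul_of_nonneg_left (hdM i j) hε
  linarith

lemma one_sub_lt_coverage_of_pclbFeas {y : J → ℝ} {z : ℝ} (h : PCLBFeas d p r y z) (hp : 1 ≤ p)
    {ε δ : ℝ} (hε : 0 < ε) (hz : z < r + ε * δ) (i : I)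
    (hgap : ∀ j, 0 < d i j - r → δ ≤ d i j - r) : 1 - ε < coverage d r y i := by
  by_cases hfar : ∃ j, r < d i j
  · obtain ⟨j₁, hj₁⟩ := hfar
    obtain ⟨j, hj, hnext⟩ := Finset.exists_min_image (univ.filter fun j => r < d i j) (d i)
      ⟨j₁, Finset.mem_filter.2 ⟨mem_univ _, hj₁⟩⟩
    replace hj := (Finset.mem_filter.1 hj).2
    have hcon := h.2.1 i j hj
    rw [sum_eq_mul_coverage y hj fun j' hj' => hnext j' (Finset.mem_filter.2 ⟨mem_univ _, hj'⟩)]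
      at hcon
    by_contra! hc
    have h1 := mul_le_mul_of_nonneg_left hc (sub_nonneg.2 hj.le)
    have h2 := mul_le_mul_of_nonneg_left (hgap j (sub_pos.2 hj)) hε.le
    linarith
  · push Not at hfar
    rw [coverage_eq_of_forall_le hfar, h.1]
    have : (1 : ℝ) ≤ p := by exact_mod_cast hp
    linarith

lemma lval_eq_self_iff (hp1 : 1 ≤ p) (hp2 : p ≤ Fintype.card J) :
    Lval d p r = r ↔ ∀ ε > 0, ∃ y, IsFracSelection p y ∧ ∀ i, 1 - ε ≤ coverage d r y i := by
  constructor
  · intro hfix ε hε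
    obtain ⟨δ, hδ, hgap⟩ := exists_pos_forall_le_of_pos fun q : I × J => d q.1 q.2 - r
    obtain ⟨z, ⟨y, hyz⟩, hz⟩ :=
      Real.lt_sInf_add_pos (pclbFeas_nonempty (d := d) hp2) (mul_pos hε hδ)
    change z < Lval d p r + _ at hz
    rw [hfix] at hz
    exact ⟨y, ⟨hyz.1, hyz.2.2.2⟩, fun i =>
      (one_sub_lt_coverage_of_pclbFeas hyz hp1 hε hz i fun j => hgap (i, j)).le⟩
  · intro hcov
    refine le_antisymm (le_of_forall_pos_le_add fun ε hε => ?_) (le_lval hp2)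
    obtain ⟨C, hC⟩ := exists_forall_le d
    have hM : 0 < |C - r| + 1 := by positivity
    obtain ⟨y, hy, hcov⟩ := hcov (ε / (|C - r| + 1)) (div_pos hε hM)
    have hdM : ∀ i j, d i j ≤ r + (|C - r| + 1) := fun i j => by
      linarith [hC i j, le_abs_self (C - r)]
    have := lval_le_of_pclbFeas (pclbFeas_of_coverage hy (div_pos hε hM).le hM.le hdM hcov)
    rwa [div_mul_cancel₀ _ hM.ne'] at this

lemma lval_eq_self_of_forall_le (hp1 : 1 ≤ p) (hp2 : p ≤ Fintype.card J)
    (h : ∀ i j, d i j ≤ r) : Lval d p r = r := by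
  refine (lval_eq_self_iff hp1 hp2).2 fun ε _ => ?_
  obtain ⟨y, hy⟩ := exists_isFracSelection hp2
  refine ⟨y, hy, fun i => ?_⟩
  rw [coverage_eq_of_forall_le (h i), hy.1]
  have : (1 : ℝ) ≤ p := by exact_mod_cast hp1
  linarith

lemma exists_le_of_lval_eq_self (hp1 : 1 ≤ p) (hp2 : p ≤ Fintype.card J)
    (hfix : Lval d p r = r) (i : I) : ∃ j, d i j ≤ r := by
  obtain ⟨y, -, hcov⟩ := (lval_eq_self_iff hp1 hp2).1 hfix (1 / 2) (by norm_num)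
  have : coverage d r y i ≠ 0 := by linarith [hcov i]
  obtain ⟨j, hj, -⟩ := Finset.exists_ne_zero_of_sum_ne_zero this
  exact ⟨j, (Finset.mem_filter.1 hj).2⟩

lemma lval_eq_self_congr (hp1 : 1 ≤ p) (hp2 : p ≤ Fintype.card J) {r' : ℝ}
    (h : ∀ i j, d i j ≤ r ↔ d i j ≤ r') : Lval d p r = r ↔ Lval d p r' = r' := by
  simp only [lval_eq_self_iff hp1 hp2, coverage, h]

end PCLB

theorem stmt_12_general {I J : Type*} [Fintype I] [Fintype J] [Nonempty I]
    (d : I → J → ℝ)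
    (p : ℕ) (hp1 : 1 ≤ p) (hp2 : p ≤ Fintype.card J) :
    ∃ LBsharp : ℝ, IsLeast {LB : ℝ | Lval d p LB = LB} LBsharp ∧
      ∃ (i : I) (j : J), d i j = LBsharp := by
  set S := {LB : ℝ | Lval d p LB = LB}
  set D := Set.range fun q : I × J => d q.1 q.2
  have hS : S.Nonempty := by
    obtain ⟨C, hC⟩ := exists_forall_le d
    exact ⟨C, lval_eq_self_of_forall_le hp1 hp2 hC⟩
  have hdescend : ∀ r ∈ S, ∃ a ∈ S ∩ D, a ≤ r := by
    intro r hr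
    obtain ⟨j, hj⟩ := exists_le_of_lval_eq_self hp1 hp2 hr (Classical.arbitrary I)
    obtain ⟨⟨i₀, j₀⟩, hle, hiff⟩ :=
      exists_le_iff_le_of_exists_le (fun q : I × J => d q.1 q.2) ⟨(_, j), hj⟩
    exact ⟨d i₀ j₀, ⟨(lval_eq_self_congr hp1 hp2 fun i j => hiff (i, j)).1 hr, (i₀, j₀), rfl⟩, hle⟩
  obtain ⟨m, hm, ⟨i, j⟩, hij⟩ :=
    exists_isLeast_mem_of_forall_exists_le (Set.finite_range _) hS hdescend
  exact ⟨m, hm, i, j, hij⟩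

/-- The set `{LB ∈ ℝ : L(LB) = LB}` is nonempty and has a minimum element `LB#`,
and `LB#` belongs to the set `D` of all distance values. -/
theorem stmt_12 {I J : Type*} [Fintype I] [Fintype J] [Nonempty I] [Nonempty J]
    (d : I → J → ℝ) (hd : ∀ i j, 0 ≤ d i j)
    (p : ℕ) (hp1 : 1 ≤ p) (hp2 : p ≤ Fintype.card J) :
    ∃ LBsharp : ℝ, IsLeast {LB : ℝ | Lval d p LB = LB} LBsharp ∧
      ∃ (i : I) (j : J), d i j = LBsharp :=
  stmt_12_general d p hp1 hp2
end
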